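/- arXiv:2108.06934 — 8 statements merged into one kernel-verified Lean document; each statement's English description precedes it below -/
import Mathlib

section
/- For an integer k > 1, the unique positive real root y_0 of y^k - \sum_{i=0}^{k-1} y^i = 0 satisfies y_0 > 2(1 - 2^{-k}). -/
/-!
Put `a = 2 (1 - 2⁻ᵏ)` and suppose `y₀ ≤ a`. Since `∑_{i<k} y^(i-k)` decreases in `y > 0` and equals
`1` at `y₀`, we get `∑_{i<k} aⁱ ≤ aᵏ`. On the other hand `(a - 1) ∑_{i<k} aⁱ = aᵏ - 1`, so this
inequality fails as soon as `aᵏ (2 - a) > 1`; for our `a` the left side is `2 (1 - 2⁻ᵏ)ᵏ`, which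
exceeds `1` by the strict Bernoulli inequality together with `2k ≤ 2ᵏ`.
-/

open Finset

lemma two_mul_le_two_pow (n : ℕ) : 2 * n ≤ 2 ^ n := by
  cases n with
  | zero => simp
  | succ n => rw [pow_succ]; have := n.lt_two_pow_self; omega

lemma one_add_mul_lt_pow {s : ℝ} (hs : -1 ≤ s) (hs₀ : s ≠ 0) {n : ℕ} (hn : 2 ≤ n) :
    1 + n * s < (1 + s) ^ n := by
  have hn₁ : (1 : ℝ) < n := by exact_mod_cast hn
  simpa only [Real.rpow_natCast] using one_add_mul_self_lt_rpow_one_add hs hs₀ hn₁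

lemma half_lt_one_sub_half_pow_pow {k : ℕ} (hk : 2 ≤ k) :
    1 / 2 < (1 - (1 / 2 : ℝ) ^ k) ^ k := by
  have hpos : (0 : ℝ) < (1 / 2) ^ k := by positivity
  have hle : (1 / 2 : ℝ) ^ k ≤ 1 := pow_le_one₀ (by norm_num) (by norm_num)
  have hsmall : (k : ℝ) * (1 / 2) ^ k ≤ 1 / 2 := by
    have : (2 * k : ℝ) ≤ 2 ^ k := by exact_mod_cast two_mul_le_two_pow k
    rw [one_div_pow, mul_one_div, div_le_iff₀ (by positivity)]
    linarith
  have := one_add_mul_lt_pow (s := -(1 / 2) ^ k) (by linarith) (neg_ne_zero.mpr hpos.ne') hk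
  rw [← sub_eq_add_neg] at this
  linarith

lemma geom_sum_mul_pow_le_geom_sum_mul_pow {R : Type*} [CommSemiring R] [PartialOrder R]
    [IsOrderedRing R] {x y : R} (hx : 0 ≤ x) (hxy : x ≤ y) (k : ℕ) :
    (∑ i ∈ range k, y ^ i) * x ^ k ≤ (∑ i ∈ range k, x ^ i) * y ^ k := by
  rw [sum_mul, sum_mul]
  refine sum_le_sum fun i hi => ?_
  have hik : i ≤ k := (mem_range.mp hi).le
  rw [← pow_mul_pow_sub x hik, ← pow_mul_pow_sub y hik]
  calc y ^ i * (x ^ i * x ^ (k - i)) = x ^ i * y ^ i * x ^ (k - i) := by ring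
    _ ≤ x ^ i * y ^ i * y ^ (k - i) := by
      have := mul_nonneg (pow_nonneg hx i) (pow_nonneg (hx.trans hxy) i)
      gcongr
    _ = x ^ i * (y ^ i * y ^ (k - i)) := by ring

lemma pow_lt_geom_sum {R : Type*} [CommRing R] [LinearOrder R] [IsStrictOrderedRing R]
    {a : R} {k : ℕ} (ha : 1 < a) (h : 1 < a ^ k * (2 - a)) :
    a ^ k < ∑ i ∈ range k, a ^ i := by
  refine lt_of_mul_lt_mul_right ?_ (sub_nonneg.mpr ha.le)
  rw [geom_sum_mul]
  linarith

/-- For an integer `k > 1`, the unique positive real root `y₀` of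
`y^k - ∑_{i=0}^{k-1} y^i = 0` satisfies `y₀ > 2 (1 - 2^{-k})`. -/
theorem stmt2 (k : ℕ) (hk : 2 ≤ k) (y₀ : ℝ) (hy₀ : 0 < y₀)
    (hroot : y₀ ^ k - ∑ i ∈ Finset.range k, y₀ ^ i = 0) :
    2 * (1 - (1 / 2 : ℝ) ^ k) < y₀ := by
  set a : ℝ := 2 * (1 - (1 / 2 : ℝ) ^ k) with ha
  have ha₁ : 1 < a := by
    have : (1 / 2 : ℝ) ^ k < 1 / 2 := by
      simpa using pow_lt_pow_right_of_lt_one₀ (by norm_num : (0 : ℝ) < 1 / 2) (by norm_num) hk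
    linarith
  have hbound : 1 < a ^ k * (2 - a) := by
    have hinv : (2 : ℝ) ^ k * (1 / 2) ^ k = 1 := by rw [← mul_pow]; norm_num
    have := half_lt_one_sub_half_pow_pow hk
    rw [ha, mul_pow]
    linear_combination 2 * this - 2 * (1 - (1 / 2 : ℝ) ^ k) ^ k * hinv
  by_contra! hle
  have hsum : ∑ i ∈ range k, y₀ ^ i = y₀ ^ k := by linarith
  have hmono := geom_sum_mul_pow_le_geom_sum_mul_pow hy₀.le hle k
  rw [hsum, mul_comm] at hmono
  have hgeom_le : ∑ i ∈ range k, a ^ i ≤ a ^ k := le_of_mul_le_mul_left hmono (pow_pos hy₀ k)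
  linarith [pow_lt_geom_sum ha₁ hbound]
end

section
/- If S is a binary non-overlapping code, then the q-ary code \Phi_{I,J}(S) obtained by replacing each 0 with any letter from I and each 1 with any letter from J is a q-ary non-overlapping code. -/
/-- A (possibly variable-length) code, given as a set of words, is non-overlapping if
(1) no nonempty proper prefix of a codeword equals a nonempty proper suffix of a
codeword (including of itself), and (2) no codeword contains a distinct codeword
as a contiguous subword. -/
def NonOverlapping {α : Type*} (S : Set (List α)) : Prop :=
  (∀ u ∈ S, ∀ v ∈ S, ∀ p : List α, p ≠ [] → p ≠ u → p ≠ v → p <+: u → ¬ p <:+ v) ∧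
  (∀ u ∈ S, ∀ v ∈ S, u ≠ v → ¬ v <:+: u)

/-!
Read each letter of `Fin q` through the map `c` sending `I` to `0` and everything else to `1`.
Every word of `Φ_{I,J}(S)` then has its image under `c` in `S`, and `List.map c`
carries prefixes, suffixes and infixes to prefixes, suffixes and infixes of the same length.
Hence any forbidden overlap or containment between words of `Φ_{I,J}(S)` would map to one
between codewords of `S`.
-/

theorem List.Forall₂.eq_map {α β : Type*} {R : α → β → Prop} {f : α → β}
    (hR : ∀ a b, R a b → b = f a) {l₁ : List α} {l₂ : List β} (h : List.Forall₂ R l₁ l₂) :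
    l₂ = l₁.map f := by
  induction h with
  | nil => rfl
  | cons hab _ ih => rw [List.map_cons, hR _ _ hab, ih]

namespace NonOverlapping

variable {α β : Type*}

theorem mono {S T : Set (List α)} (hTS : T ⊆ S) (hS : NonOverlapping S) : NonOverlapping T :=
  ⟨fun u hu v hv => hS.1 u (hTS hu) v (hTS hv), fun u hu v hv => hS.2 u (hTS hu) v (hTS hv)⟩

theorem preimage_map {S : Set (List β)} (f : α → β) (hS : NonOverlapping S) :
    NonOverlapping (List.map f ⁻¹' S) := by
  have length_eq {x y : List α} (h : x.map f = y.map f) : x.length = y.length := by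
    simpa using congrArg List.length h
  constructor
  · intro u hu v hv p hp hpu hpv hpre hsuf
    refine hS.1 _ hu _ hv (p.map f) (by simpa using hp) ?_ ?_ (hpre.map f) (hsuf.map f)
    · exact fun h => hpu (hpre.eq_of_length (length_eq h))
    · exact fun h => hpv (hsuf.eq_of_length (length_eq h))
  · intro u hu v hv huv hinf
    by_cases h : u.map f = v.map f
    · exact huv (hinf.eq_of_length (length_eq h).symm).symm
    · exact hS.2 _ hu _ hv h (hinf.map f)

end NonOverlapping

theorem stmt4_general (q : ℕ) (I J : Set (Fin q))
    (hd : Disjoint I J)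
    (S : Set (List (Fin 2)))
    (hS : NonOverlapping S) :
    NonOverlapping {w : List (Fin q) |
      ∃ ω ∈ S, List.Forall₂ (fun (a : Fin q) (b : Fin 2) => if b = 0 then a ∈ I else a ∈ J) w ω} := by
  classical
  let c : Fin q → Fin 2 := fun a => if a ∈ I then 0 else 1
  have letter_eq (a : Fin q) (b : Fin 2) (hab : if b = 0 then a ∈ I else a ∈ J) : b = c a := by
    by_cases hb : b = 0
    · simp_all [c]
    · have haI : a ∉ I := fun haI => hd.notMem_of_mem_left haI (by simpa [hb] using hab)
      simp only [c, if_neg haI]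
      omega
  refine (hS.preimage_map c).mono ?_
  rintro w ⟨ω, hω, hwω⟩
  rwa [Set.mem_preimage, ← hwω.eq_map letter_eq]

/-- If `S` is a binary non-overlapping code, then the `q`-ary code
`Φ_{I,J}(S)` obtained by replacing each `0` with any letter from `I` and each `1`
with any letter from `J` is a `q`-ary non-overlapping code. -/
theorem stmt4 (q : ℕ) (hq : 2 ≤ q) (I J : Set (Fin q))
    (hI : I.Nonempty) (hJ : J.Nonempty) (hd : Disjoint I J) (hu : I ∪ J = Set.univ)
    (S : Set (List (Fin 2))) (hlen : ∀ w ∈ S, 2 ≤ w.length)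
    (hS : NonOverlapping S) :
    NonOverlapping {w : List (Fin q) |
      ∃ ω ∈ S, List.Forall₂ (fun (a : Fin q) (b : Fin 2) => if b = 0 then a ∈ I else a ∈ J) w ω} :=
  stmt4_general q I J hd S hS
end

section
/- The code S_q^{(k)}(n), consisting of all words of length n over \{0,...,q-1\} that begin with exactly k zeros (positions 1 through k are 0, position k+1 is nonzero), end with a nonzero symbol, and whose suffix from position k+1 to n contains no k consecutive zeros, is a non-overlapping code. -/
theorem List.IsPrefix.getD_eq {α : Type*} {xs ys : List α} (h : xs <+: ys) (d : α) {i : ℕ}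
    (hi : i < xs.length) : ys.getD i d = xs.getD i d := by
  rw [List.getD_eq_getElem _ _ hi, List.getD_eq_getElem _ _ (hi.trans_le h.length_le),
    h.getElem hi]

theorem List.IsSuffix.getD_eq {α : Type*} {xs ys : List α} (h : xs <:+ ys) (d : α) {i : ℕ}
    (hi : i < xs.length) : ys.getD (ys.length - xs.length + i) d = xs.getD i d := by
  have hi' : ys.length - xs.length + i < ys.length := by have := h.length_le; omega
  rw [List.getD_eq_getElem _ _ hi, List.getD_eq_getElem _ _ hi', h.getElem hi]

theorem eq_nil_of_isPrefix_of_isSuffix {α : Type*} [Zero α] {n k : ℕ} {u v p : List α}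
    (hu : u.length = n) (hv : v.length = n) (hu0 : ∀ i < k, u.getD i 0 = 0)
    (hvk : v.getD k 0 ≠ 0) (hvlast : v.getD (n - 1) 0 ≠ 0)
    (hvrun : ∀ i, k ≤ i → i + k ≤ n → ¬ ∀ j < k, v.getD (i + j) 0 = 0)
    (hpu : p <+: u) (hpv : p <:+ v) (hpn : p.length < n) : p = [] := by
  by_contra hp
  have hp0 : 0 < p.length := List.length_pos_of_ne_nil hp
  -- `getD` past the end of `v` returns the default `0`.
  have hkn : k < n := by
    by_contra! h
    exact hvk (List.getD_eq_default _ _ (by omega))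
  have hshift : ∀ j < p.length, v.getD (n - p.length + j) 0 = u.getD j 0 := fun j hj => by
    rw [← hv, hpv.getD_eq 0 hj, hpu.getD_eq 0 hj]
  rcases le_or_gt p.length k with hpk | hkp
  · have hlast := hshift (p.length - 1) (by omega)
    rw [show n - p.length + (p.length - 1) = n - 1 by omega, hu0 _ (by omega)] at hlast
    exact hvlast hlast
  rcases le_or_gt (p.length + k) n with hfit | hover
  · exact hvrun (n - p.length) (by omega) (by omega) fun j hj =>
      (hshift j (by omega)).trans (hu0 j hj)
  · have hcover := hshift (p.length + k - n) (by omega)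
    rw [show n - p.length + (p.length + k - n) = k by omega, hu0 _ (by omega)] at hcover
    exact hvk hcover

theorem stmt5_general (n q k : ℕ) :
    NonOverlapping {w : List ℕ | w.length = n ∧ (∀ a ∈ w, a < q) ∧
      (∀ i < k, w.getD i 0 = 0) ∧ w.getD k 0 ≠ 0 ∧ w.getD (n - 1) 0 ≠ 0 ∧
      ∀ i, k ≤ i → i + k ≤ n → ¬ (∀ j < k, w.getD (i + j) 0 = 0)} := by
  constructor
  · rintro u ⟨hu, -, hu0, -, -, -⟩ v ⟨hv, -, -, hvk, hvlast, hvrun⟩ p hp hpu_ne - hpu hpv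
    have hpn : p.length < n :=
      hu ▸ lt_of_le_of_ne hpu.length_le fun h => hpu_ne (hpu.eq_of_length h)
    exact hp (eq_nil_of_isPrefix_of_isSuffix hu hv hu0 hvk hvlast hvrun hpu hpv hpn)
  · rintro u ⟨hu, -⟩ v ⟨hv, -⟩ huv hvu
    exact huv (hvu.eq_of_length (hv.trans hu.symm)).symm

/-- The code `S_q^{(k)}(n)` of all words of length `n` over
`{0, …, q-1}` that begin with exactly `k` zeros (positions `0, …, k-1` are `0`,
position `k` is nonzero), end with a nonzero symbol, and whose suffix from
position `k` onwards contains no `k` consecutive zeros, is non-overlapping. -/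
theorem stmt5 (n q k : ℕ) (hn : 2 ≤ n) (hq : 2 ≤ q) (hk1 : 1 ≤ k) (hk2 : k ≤ n - 1) :
    NonOverlapping {w : List ℕ | w.length = n ∧ (∀ a ∈ w, a < q) ∧
      (∀ i < k, w.getD i 0 = 0) ∧ w.getD k 0 ≠ 0 ∧ w.getD (n - 1) 0 ≠ 0 ∧
      ∀ i, k ≤ i → i + k ≤ n → ¬ (∀ j < k, w.getD (i + j) 0 = 0)} :=
  stmt5_general n q k
end

section
/- The non-overlapping code S_{I,J}^{(k)}(n) given by Construction I' is non-expandable if k = n-1 or 1 \le k < n/2; that is, for every word x in \mathbb{Z}_q^n not in S_{I,J}^{(k)}(n), the code S_{I,J}^{(k)}(n) \cup \{x\} is overlapping. -/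
/-!
Let `x ∉ S` have length `n`, and pick `i ∈ I`, `j ∈ J`. We exhibit a codeword overlapping `x`.
* If the last letter `a` of `x` is in `I`, then `x` ends with the first letter of `aᵏ jⁿ⁻ᵏ`.
* If one of the first `k` letters of `x` is in `J`, the shortest prefix `x₀ ⋯ x_t` of `x`
  ending in `J` (so `t < k`) is a suffix of the codeword `iⁿ⁻ᵗ⁻¹ x₀ ⋯ x_t` when `k = n - 1`,
  and of `iᵏ jⁿ⁻ᵏ⁻ᵗ⁻¹ x₀ ⋯ x_t` when `2k < n`.
* Otherwise `x ∉ S` forces a run of `k` letters of `I` starting after position `0`. The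
  shortest suffix `y` of `x` starting with such a run contains no later run, so `y jⁿ⁻|y|` is a
  codeword beginning with the proper suffix `y` of `x`.
-/

namespace List

variable {α : Type*}

theorem exists_append_cons_of_exists_not {p : α → Prop} {l : List α} (h : ∃ a ∈ l, ¬ p a) :
    ∃ s c z, l = s ++ c :: z ∧ (∀ a ∈ s, p a) ∧ ¬ p c := by
  induction l with
  | nil => simp at h
  | cons a l ih =>
    by_cases ha : p a
    · obtain ⟨s, c, z, rfl, hs, hc⟩ := ih (by simpa [ha] using h)
      exact ⟨a :: s, c, z, rfl, by simpa [ha] using hs, hc⟩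
    · exact ⟨[], a, l, rfl, by simp, ha⟩

theorem exists_minimal_suffix (P : List α → Prop) {l : List α} (h : P l) :
    ∃ y, y <:+ l ∧ P y ∧ ∀ z, z <:+ y → z.length < y.length → ¬ P z := by
  obtain ⟨y, ⟨hyl, hy⟩, hmin⟩ :=
    (measure List.length).wf.has_min {y | y <:+ l ∧ P y} ⟨l, suffix_refl l, h⟩
  exact ⟨y, hyl, hy, fun z hzy hlt hz => hmin z ⟨hzy.trans hyl, hz⟩ hlt⟩

theorem mem_of_singleton_suffix_append {c : α} {l₁ l₂ : List α} (h : [c] <:+ l₁ ++ l₂)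
    (hl₂ : l₂ ≠ []) : c ∈ l₂ :=
  (suffix_of_suffix_length_le h (suffix_append l₁ l₂) (length_pos_iff.mpr hl₂)).subset
    (mem_singleton_self c)

theorem IsInfix.of_append_cons {u l₁ l₂ : List α} {b : α} (h : u <:+: l₁ ++ b :: l₂)
    (hb : b ∉ u) : u <:+: l₁ ∨ u <:+: l₂ := by
  have prefix_nil : ∀ {v : List α}, v <+: b :: l₂ → v <:+ u → v = [] := by
    intro v hv hvu
    rcases prefix_cons_iff.mp hv with rfl | ⟨t, rfl, -⟩
    · rfl
    · exact absurd (hvu.subset mem_cons_self) hb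
  rcases infix_append_iff.mp h with h | h | ⟨v₁, v₂, rfl, hv₁, hv₂⟩
  · exact .inl h
  · rcases infix_cons_iff.mp h with h | h
    · rw [prefix_nil h (suffix_refl u)]
      exact .inl nil_infix
    · exact .inr h
  · rw [prefix_nil hv₂ (suffix_append v₁ v₂), append_nil]
    exact .inl hv₁.isInfix

end List

namespace ConstructionI

variable {α : Type*}

def Overlaps (u v : List α) : Prop :=
  ∃ p, p ≠ [] ∧ p ≠ u ∧ p ≠ v ∧ p <+: u ∧ p <:+ v

theorem overlaps_of_length_lt {u v p : List α} (hp : p ≠ []) (hu : p.length < u.length)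
    (hv : p.length < v.length) (hpu : p <+: u) (hpv : p <:+ v) : Overlaps u v :=
  ⟨p, hp, by rintro rfl; omega, by rintro rfl; omega, hpu, hpv⟩

variable (I : Set α) (k : ℕ)

def IsRun (u : List α) : Prop := u.length = k ∧ ∀ a ∈ u, a ∈ I

def RunFree (l : List α) : Prop := ∀ u, IsRun I k u → ¬ u <:+: l

variable {I k}

theorem runFree_of_length_lt {l : List α} (h : l.length < k) : RunFree I k l :=
  fun _ hu hul => by have := hul.length_le; have := hu.1; omega

theorem runFree_of_forall_not_mem (hk : 0 < k) {l : List α} (h : ∀ a ∈ l, a ∉ I) :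
    RunFree I k l := by
  rintro (_ | ⟨a, u⟩) ⟨hlen, hu⟩ hul
  · simp at hlen; omega
  · exact h a (hul.subset List.mem_cons_self) (hu a List.mem_cons_self)

theorem RunFree.append_cons {l₁ l₂ : List α} {b : α} (h₁ : RunFree I k l₁)
    (h₂ : RunFree I k l₂) (hb : b ∉ I) : RunFree I k (l₁ ++ b :: l₂) := by
  intro u hu hul
  rcases hul.of_append_cons (fun hbu => hb (hu.2 b hbu)) with h | h
  exacts [h₁ u hu h, h₂ u hu h]

variable (I k) in
/-- Construction I' with `J = Iᶜ`, a codeword being split as `p ++ b :: r` with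
`p = (s₁, …, s_k)` and `b = s_{k+1}`. -/
def constructionCode (n : ℕ) : Set (List α) :=
  {w | w.length = n ∧ (∀ c, [c] <:+ w → c ∉ I) ∧
    ∃ p b r, w = p ++ b :: r ∧ IsRun I k p ∧ b ∉ I ∧ RunFree I k (b :: r)}

theorem constructionCode_subset {n : ℕ} (d : α) :
    constructionCode I k n ⊆ {w | w.length = n ∧ (∀ a ∈ w.take k, a ∈ I) ∧
      w.getD k d ∈ Iᶜ ∧ w.getD (n - 1) d ∈ Iᶜ ∧
      ¬ ∃ u : List α, u.length = k ∧ (∀ a ∈ u, a ∈ I) ∧ u <:+: w.drop k} := by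
  rintro w ⟨hlen, hlast, p, b, r, rfl, ⟨hp, hpI⟩, hb, hfree⟩
  refine ⟨hlen, by simpa [← hp] using hpI, by simpa [← hp] using hb, hlast _ ?_, ?_⟩
  · rw [List.singleton_suffix_iff_getLast?_eq_some, List.getLast?_eq_getElem?, hlen,
      List.getD_eq_getElem?_getD, List.getElem?_eq_getElem (by simp at hlen ⊢; omega)]
    rfl
  · rintro ⟨u, hu, huI, hinf⟩
    exact hfree u ⟨hu, huI⟩ (by simpa [← hp] using hinf)

theorem exists_overlaps_of_last_mem {n : ℕ} {a j : α} {x : List α} (hk : 0 < k) (hkn : k < n)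
    (hj : j ∉ I) (hx : x.length = n) (ha : [a] <:+ x) (haI : a ∈ I) :
    ∃ w ∈ constructionCode I k n, Overlaps w x := by
  obtain ⟨m, rfl⟩ : ∃ m, n = k + m + 1 := ⟨n - k - 1, by omega⟩
  obtain ⟨k, rfl⟩ : ∃ k', k = k' + 1 := ⟨k - 1, by omega⟩
  refine ⟨List.replicate (k + 1) a ++ List.replicate (m + 1) j, ⟨by simp; omega, fun c hc => ?_,
    _, j, _, rfl, ⟨by simp, by simpa⟩, hj, runFree_of_forall_not_mem hk (by simp [hj])⟩,
    overlaps_of_length_lt (by simp) (by simp; omega) (by simp; omega)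
      (by simp [List.replicate_succ]) ha⟩
  rw [List.eq_of_mem_replicate (List.mem_of_singleton_suffix_append hc (by simp))]
  exact hj

theorem exists_mem_with_suffix_of_eq_sub_one {n : ℕ} {i c : α} {s : List α} (hk : 0 < k)
    (hkn : k = n - 1) (hi : i ∈ I) (hs : ∀ a ∈ s, a ∈ I) (hc : c ∉ I) (hsk : s.length < k) :
    ∃ w ∈ constructionCode I k n, s ++ [c] <:+ w := by
  refine ⟨(List.replicate (k - s.length) i ++ s) ++ [c], ⟨by simp; omega, fun c' hc' => ?_,
    _, c, [], rfl, ⟨by simp; omega, ?_⟩, hc, ?_⟩, ?_⟩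
  · rw [List.eq_of_mem_singleton (List.mem_of_singleton_suffix_append hc' (List.cons_ne_nil _ _))]
    exact hc
  · simp only [List.mem_append, List.mem_replicate]
    rintro a (⟨-, rfl⟩ | ha)
    exacts [hi, hs a ha]
  · exact (runFree_of_length_lt (l := []) hk).append_cons (runFree_of_length_lt (l := []) hk) hc
  · exact ⟨_, (List.append_assoc _ _ _).symm⟩

theorem exists_mem_with_suffix_of_two_mul_lt {n : ℕ} {i j c : α} {s : List α} (hk : 0 < k)
    (hkn : 2 * k < n) (hi : i ∈ I) (hj : j ∉ I) (hc : c ∉ I)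
    (hsk : s.length < k) : ∃ w ∈ constructionCode I k n, s ++ [c] <:+ w := by
  obtain ⟨m, rfl⟩ : ∃ m, n = k + 1 + m + s.length + 1 := ⟨n - k - s.length - 2, by omega⟩
  have hfree : RunFree I k (List.replicate m j ++ j :: s) :=
    (runFree_of_forall_not_mem hk (by simp [hj])).append_cons (runFree_of_length_lt hsk) hj
  have hshape : j :: (List.replicate m j ++ s ++ [c]) = (List.replicate m j ++ j :: s) ++ [c] := by
    rw [← List.cons_append, ← List.cons_append, ← List.replicate_succ, List.replicate_succ']
    simp
  refine ⟨(List.replicate k i ++ j :: (List.replicate m j ++ s)) ++ [c], ⟨by simp; omega,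
    fun c' hc' => ?_, List.replicate k i, j, List.replicate m j ++ s ++ [c], by simp,
    ⟨by simp, by simp [hi]⟩, hj, ?_⟩, ⟨List.replicate k i ++ j :: List.replicate m j, by simp⟩⟩
  · rw [List.eq_of_mem_singleton (List.mem_of_singleton_suffix_append hc' (List.cons_ne_nil _ _))]
    exact hc
  · rw [hshape]
    exact hfree.append_cons (runFree_of_length_lt (l := []) hk) hc

theorem exists_overlaps_of_proper_suffix_run {n : ℕ} {j : α} {x : List α} (hk : 0 < k) (hj : j ∉ I)
    (hx : x.length = n) (hlast : ∀ c, [c] <:+ x → c ∉ I)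
    (hrun : ∃ z, z <:+ x ∧ z.length < n ∧ ∃ u, IsRun I k u ∧ u <+: z) :
    ∃ w ∈ constructionCode I k n, Overlaps w x := by
  obtain ⟨z, hzx, hzn, hz⟩ := hrun
  obtain ⟨y, hyz, ⟨u, hu, v, rfl⟩, hmin⟩ :=
    List.exists_minimal_suffix (fun y => ∃ u, IsRun I k u ∧ u <+: y) hz
  have hyx := hyz.trans hzx
  have hyn : (u ++ v).length < n := hyz.length_le.trans_lt hzn
  have hu0 : u ≠ [] := by rintro rfl; have := hu.1; simp at this; omega
  have hv : RunFree I k v := by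
    intro u' hu' hinf
    obtain ⟨t, hut, htv⟩ := List.infix_iff_prefix_suffix.mp hinf
    refine hmin t (htv.trans (List.suffix_append u v)) ?_ ⟨u', hu', hut⟩
    have := htv.length_le
    have := List.length_pos_iff.mpr hu0
    simp only [List.length_append]
    omega
  obtain ⟨b, r, rfl⟩ : ∃ b r, v = b :: r := by
    refine List.ne_nil_iff_exists_cons.mp fun hv0 => ?_
    subst hv0
    obtain ⟨u', a, rfl⟩ := u.eq_nil_or_concat.resolve_left hu0
    exact hlast a ((List.suffix_append u' [a]).trans (by simpa using hyx)) (hu.2 a (by simp))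
  have hb : b ∉ I := by
    intro hbI
    obtain ⟨a, u', rfl⟩ := List.ne_nil_iff_exists_cons.mp hu0
    refine hmin (u' ++ b :: r) (by simp) (by simp) ⟨u' ++ [b], ⟨?_, ?_⟩, by simp⟩
    · have := hu.1; simp at this ⊢; omega
    · simp only [List.mem_append, List.mem_singleton]
      rintro c (hc | rfl)
      exacts [hu.2 c (List.mem_cons_of_mem a hc), hbI]
  obtain ⟨M, hM⟩ : ∃ M, n = (u ++ b :: r).length + M + 1 :=
    ⟨n - (u ++ b :: r).length - 1, by omega⟩
  refine ⟨u ++ b :: r ++ List.replicate (M + 1) j, ⟨by simp at hM ⊢; omega, fun c hc => ?_,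
    u, b, r ++ List.replicate (M + 1) j, by simp, hu, hb,
    hv.append_cons (runFree_of_forall_not_mem hk (by simp [hj])) hj⟩,
    overlaps_of_length_lt (by simp) (by simp) (by omega) (List.prefix_append _ _) hyx⟩
  rw [List.eq_of_mem_replicate (List.mem_of_singleton_suffix_append hc (by simp))]
  exact hj

theorem exists_proper_suffix_run_of_not_mem {n : ℕ} {x : List α} (hk : 0 < k) (hkn : k < n)
    (hx : x.length = n) (hlast : ∀ c, [c] <:+ x → c ∉ I) (hpre : ∀ a ∈ x.take k, a ∈ I)
    (hxC : x ∉ constructionCode I k n) :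
    ∃ z, z <:+ x ∧ z.length < n ∧ ∃ u, IsRun I k u ∧ u <+: z := by
  subst hx
  obtain ⟨b, r, hbr⟩ := List.ne_nil_iff_exists_cons.mp (show x.drop k ≠ [] by simp; omega)
  have hxbr : x = x.take k ++ b :: r := by rw [← hbr, List.take_append_drop]
  by_cases hb : b ∈ I
  · obtain ⟨a, p, hp⟩ := List.ne_nil_iff_exists_cons.mp
      (List.ne_nil_of_length_pos (l := x.take k) (by simp; omega))
    rw [hp] at hxbr hpre
    have hpk : p.length + 1 = k := by
      have := congrArg List.length hp; simp at this; omega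
    refine ⟨p ++ b :: r, ?_, ?_, p ++ [b], ⟨by simpa, ?_⟩, by simp⟩
    · rw [hxbr]; exact List.suffix_cons a _
    · have := congrArg List.length hxbr; simp at this ⊢; omega
    · simp only [List.mem_append, List.mem_singleton]
      rintro c (hc | rfl)
      exacts [hpre c (List.mem_cons_of_mem a hc), hb]
  · have hnfree : ¬ RunFree I k (b :: r) := fun hfree =>
      hxC ⟨rfl, hlast, _, b, r, hxbr, ⟨by simp; omega, hpre⟩, hb, hfree⟩
    simp only [RunFree, not_forall, not_not] at hnfree
    obtain ⟨u, hu, hinf⟩ := hnfree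
    obtain ⟨t, hut, ht⟩ := List.infix_iff_prefix_suffix.mp hinf
    refine ⟨t, ht.trans (hbr ▸ List.drop_suffix k x), ?_, u, hu, hut⟩
    have h₁ := ht.length_le
    have h₂ := congrArg List.length hbr
    simp only [List.length_drop, List.length_cons] at h₁ h₂
    omega

theorem exists_overlaps_of_not_mem {n : ℕ} {i j : α} {x : List α} (hk : 0 < k)
    (hcase : k = n - 1 ∨ 2 * k < n) (hi : i ∈ I) (hj : j ∉ I) (hx : x.length = n)
    (hxC : x ∉ constructionCode I k n) :
    ∃ w ∈ constructionCode I k n, Overlaps w x ∨ Overlaps x w := by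
  have hkn : k < n := by omega
  by_cases hlast : ∃ a, [a] <:+ x ∧ a ∈ I
  · obtain ⟨a, ha, haI⟩ := hlast
    obtain ⟨w, hw, hov⟩ := exists_overlaps_of_last_mem hk hkn hj hx ha haI
    exact ⟨w, hw, .inl hov⟩
  push Not at hlast
  by_cases hpre : ∃ a ∈ x.take k, a ∉ I
  · obtain ⟨s, c, z, hsz, hs, hc⟩ := List.exists_append_cons_of_exists_not hpre
    have hsk : s.length < k := by
      have := congrArg List.length hsz; simp at this; omega
    have hpx : s ++ [c] <+: x := by
      rw [← List.take_append_drop k x, hsz]; simp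
    obtain ⟨w, hw, hsw⟩ : ∃ w ∈ constructionCode I k n, s ++ [c] <:+ w := by
      rcases hcase with hcase | hcase
      exacts [exists_mem_with_suffix_of_eq_sub_one hk hcase hi hs hc hsk,
        exists_mem_with_suffix_of_two_mul_lt hk hcase hi hj hc hsk]
    exact ⟨w, hw, .inr (overlaps_of_length_lt (by simp) (by simp [hx]; omega)
      (by rw [hw.1]; simp; omega) hpx hsw)⟩
  · push Not at hpre
    obtain ⟨w, hw, hov⟩ := exists_overlaps_of_proper_suffix_run hk hj hx hlast
      (exists_proper_suffix_run_of_not_mem hk hkn hx hlast hpre hxC)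
    exact ⟨w, hw, .inl hov⟩

end ConstructionI

/-- The non-overlapping code `S_{I,J}^{(k)}(n)` of Construction I' is
non-expandable if `k = n - 1` or `1 ≤ k < n/2`: for every word `x ∈ ℤ_q^n` not in the
code, the enlarged code fails the non-overlapping condition, i.e. some nonempty proper
prefix of one codeword equals a nonempty proper suffix of another (possibly the same). -/
theorem stmt6 (n q k : ℕ) (hq : 2 ≤ q) (hk1 : 1 ≤ k)
    (hcase : k = n - 1 ∨ 2 * k < n)
    (I J : Set (Fin q)) (hI : I.Nonempty) (hJ : J.Nonempty)
    (hd : Disjoint I J) (hu : I ∪ J = Set.univ)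
    (S : Set (List (Fin q)))
    (hS : S = {w : List (Fin q) | w.length = n ∧ (∀ a ∈ w.take k, a ∈ I) ∧
      w.getD k ⟨0, by omega⟩ ∈ J ∧ w.getD (n - 1) ⟨0, by omega⟩ ∈ J ∧
      ¬ ∃ u : List (Fin q), u.length = k ∧ (∀ a ∈ u, a ∈ I) ∧ u <:+: w.drop k}) :
    ∀ x : List (Fin q), x.length = n → x ∉ S →
      ∃ u ∈ insert x S, ∃ v ∈ insert x S, ∃ p : List (Fin q),
        p ≠ [] ∧ p ≠ u ∧ p ≠ v ∧ p <+: u ∧ p <:+ v := by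
  intro x hx hxS
  obtain ⟨i, hi⟩ := hI
  obtain ⟨j, hj⟩ := hJ
  obtain rfl : J = Iᶜ := (IsCompl.compl_eq ⟨hd, codisjoint_iff.mpr hu⟩).symm
  have hsub : ConstructionI.constructionCode I k n ⊆ S :=
    hS ▸ ConstructionI.constructionCode_subset _
  obtain ⟨w, hw, hov | hov⟩ :=
    ConstructionI.exists_overlaps_of_not_mem hk1 hcase hi hj hx (fun h => hxS (hsub h))
  · exact ⟨w, Set.mem_insert_of_mem x (hsub hw), x, Set.mem_insert x S, hov⟩
  · exact ⟨x, Set.mem_insert x S, w, Set.mem_insert_of_mem x (hsub hw), hov⟩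
end

section
/- For k \ge 2, the generating function of the number u(n) of words of length n over \mathbb{Z}_q starting and ending with a letter from J and containing no k consecutive letters from I equals |J|x(1 - |I|x) / (1 - qx + |I|^k |J| x^{k+1}); i.e., (1 - qx + |I|^k|J|x^{k+1}) \sum_{n \ge 0} u(n) x^n = |J|x(1-|I|x) as formal power series. -/
/-!
For `n ≥ 1`, a word counted by `u (n + 1)` is a letter of `J`, followed by `j < k` letters of
`I`, followed by a word counted by `u (n - j)`. Hence `u (n + 1) = |J| ∑_{j<k} |I|^j u (n - j)`,
that is `U = ∑ u n xⁿ` satisfies `U = |J| x (1 + S U)` with `S = ∑_{j<k} (|I| x)^j`; since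
`(1 - |I| x)(1 - |J| x S) = 1 - q x + |I|^k |J| x^{k+1}` by the geometric sum, multiplying by
this factor gives the identity. The decomposition is carried out one letter at a time, by
counting words according to the length of their leading run of letters from `I`.
-/

open Finset PowerSeries

theorem Nat.card_subtype_eq_sum_card_fiber {β : Type*} {P : β → Prop} (f : β → ℕ) {k : ℕ}
    (hf : ∀ w, P w → f w < k) [∀ j, Finite {w // P w ∧ f w = j}] :
    Nat.card {w // P w} = ∑ j ∈ range k, Nat.card {w // P w ∧ f w = j} := by
  let e : (Σ j : Fin k, {w // P w ∧ f w = j}) ≃ {w // P w} :=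
    { toFun := fun x => ⟨x.2.1, x.2.2.1⟩
      invFun := fun w => ⟨⟨f w, hf w w.2⟩, w, w.2, rfl⟩
      left_inv := fun ⟨j, w, hw, hfw⟩ => by obtain rfl : ⟨f w, hf w hw⟩ = j := Fin.ext hfw; rfl
      right_inv := fun _ => rfl }
  rw [← Nat.card_congr e, Nat.card_sigma,
    Fin.sum_univ_eq_sum_range (fun j => Nat.card {w // P w ∧ f w = j})]

theorem Nat.card_subtype_list_cons {β : Type*} (S : Finset β) {P R : List β → Prop}
    (hnil : ¬ P []) (hcons : ∀ a t, P (a :: t) ↔ a ∈ S ∧ R t) :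
    Nat.card {w // P w} = #S * Nat.card {t // R t} := by
  rw [← Nat.card_eq_finsetCard, ← Nat.card_prod]
  refine (Nat.card_congr (Equiv.ofBijective
    (fun x : S × {t // R t} => (⟨x.1.1 :: x.2.1, (hcons _ _).2 ⟨x.1.2, x.2.2⟩⟩ : {w // P w}))
    ⟨?_, ?_⟩)).symm
  · rintro ⟨⟨a, ha⟩, t, ht⟩ ⟨⟨b, hb⟩, s, hs⟩ h
    simp only [Subtype.mk.injEq, List.cons.injEq] at h
    obtain ⟨rfl, rfl⟩ := h
    rfl
  · rintro ⟨_ | ⟨a, t⟩, hw⟩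
    · exact absurd hw hnil
    · obtain ⟨ha, ht⟩ := (hcons a t).1 hw
      exact ⟨⟨⟨a, ha⟩, t, ht⟩, rfl⟩

theorem PowerSeries.mul_mk_eq_of_recurrence {R : Type*} [CommRing R] (b c : R) (k : ℕ)
    {a : ℕ → R} (h0 : a 0 = 0) (h1 : a 1 = c)
    (hrec : ∀ n ≠ 0, a (n + 1) = c * ∑ j ∈ range k, b ^ j * a (n - j)) :
    (1 - C (b + c) * X + C (b ^ k * c) * X ^ (k + 1)) * mk a = C c * X * (1 - C b * X) := by
  set S := ∑ j ∈ range k, (C b * X) ^ j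
  have hA : mk a = X * (C c * (1 + S * mk a)) := by
    ext (_ | n)
    · simpa using h0
    · have hsum : coeff n (S * mk a) = ∑ j ∈ range k, b ^ j * a (n - j) := by
        simp only [S, sum_mul, map_sum, mul_pow, ← map_pow, mul_assoc, coeff_C_mul,
          coeff_X_pow_mul', coeff_mk]
        refine sum_congr rfl fun j _ => ?_
        split_ifs with hj
        · rfl
        · rw [Nat.sub_eq_zero_of_le (by omega), h0, mul_zero]
      rw [coeff_succ_X_mul, coeff_C_mul, map_add, hsum, coeff_one, coeff_mk]
      rcases eq_or_ne n 0 with rfl | hn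
      · simp [h0, h1]
      · simp [hrec n hn, hn]
  have hfactor : 1 - C (b + c) * X + C (b ^ k * c) * X ^ (k + 1)
      = (1 - C b * X) * (1 - C c * X * S) := by
    simp only [map_add, map_mul, map_pow]
    linear_combination (C c * X) * mul_neg_geom_sum (C b * X) k
  rw [hfactor]
  linear_combination (1 - C b * X) * hA

namespace RunFreeWords

variable {α : Type*} (I J : Finset α) (k : ℕ)

def NoRun (w : List α) : Prop :=
  ¬ ∃ v : List α, v.length = k ∧ (∀ a ∈ v, a ∈ I) ∧ v <:+: w

def Admissible (n : ℕ) (w : List α) : Prop :=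
  w.length = n ∧ (∀ b ∈ w.getLast?, b ∈ J) ∧ NoRun I k w

variable {I J k}

theorem noRun_nil (hk : 0 < k) : NoRun I k [] := by
  rintro ⟨v, hv, -, hinf⟩
  simp only [List.infix_nil.mp hinf, List.length_nil] at hv
  omega

theorem forall_mem_getLast?_cons {a : α} {w : List α} (hw : w ≠ []) :
    (∀ b ∈ (a :: w).getLast?, b ∈ J) ↔ ∀ b ∈ w.getLast?, b ∈ J := by
  obtain ⟨b, hb⟩ := Option.isSome_iff_exists.mp (List.getLast?_isSome.mpr hw)
  simp [List.getLast?_cons, hb]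

variable [DecidableEq α]

variable (I) in
def leadingRun (w : List α) : ℕ := (w.takeWhile (· ∈ I)).length

variable (I J k) in
noncomputable def count (n j : ℕ) : ℕ :=
  Nat.card {w : List α // Admissible I J k n w ∧ leadingRun I w = j}

theorem leadingRun_cons (a : α) (w : List α) :
    leadingRun I (a :: w) = if a ∈ I then leadingRun I w + 1 else 0 := by
  by_cases ha : a ∈ I <;> simp [leadingRun, ha]

theorem leadingRun_le_length (w : List α) : leadingRun I w ≤ w.length :=
  (List.takeWhile_prefix _).length_le

theorem forall_mem_iff_length_le_leadingRun {v w : List α} (h : v <+: w) :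
    (∀ a ∈ v, a ∈ I) ↔ v.length ≤ leadingRun I w := by
  induction w generalizing v with
  | nil => simp [List.prefix_nil.mp h]
  | cons b t ih =>
    rcases v with _ | ⟨c, v⟩
    · simp
    · obtain ⟨rfl, hv⟩ := List.cons_prefix_cons.mp h
      by_cases hb : c ∈ I <;> simp [leadingRun_cons, hb, ih hv]

theorem noRun_cons (a : α) (w : List α) :
    NoRun I k (a :: w) ↔ leadingRun I (a :: w) < k ∧ NoRun I k w := by
  simp only [NoRun, List.infix_cons_iff, and_or_left, exists_or, not_or]
  refine and_congr_left' ⟨fun h => ?_, ?_⟩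
  · by_contra! hk
    have hlen := leadingRun_le_length (I := I) (a :: w)
    refine h ⟨(a :: w).take k, ?_, ?_, List.take_prefix _ _⟩
    · simp only [List.length_take]; omega
    · rw [forall_mem_iff_length_le_leadingRun (List.take_prefix _ _), List.length_take]; omega
  · rintro hk ⟨v, rfl, hv, hpre⟩
    exact absurd ((forall_mem_iff_length_le_leadingRun hpre).mp hv) (not_le.mpr hk)

theorem leadingRun_lt_of_noRun (hk : 0 < k) {w : List α} (h : NoRun I k w) :
    leadingRun I w < k := by
  cases w with
  | nil => exact hk
  | cons a w => exact ((noRun_cons a w).mp h).1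

theorem admissible_succ_cons {n : ℕ} {a : α} {t : List α} (ht : t ≠ []) :
    Admissible I J k (n + 1) (a :: t) ↔ leadingRun I (a :: t) < k ∧ Admissible I J k n t := by
  simp only [Admissible, List.length_cons, Nat.add_right_cancel_iff,
    forall_mem_getLast?_cons ht, noRun_cons]
  tauto

instance [Finite α] (n j : ℕ) :
    Finite {w : List α // Admissible I J k n w ∧ leadingRun I w = j} :=
  ((List.finite_length_eq α n).subset fun _ hw => hw.1.1).to_subtype

theorem card_admissible_eq_sum_count [Finite α] (hk : 0 < k) (n : ℕ) :
    Nat.card {w // Admissible I J k n w} = ∑ j ∈ range k, count I J k n j :=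
  Nat.card_subtype_eq_sum_card_fiber _ fun _ hw => leadingRun_lt_of_noRun hk hw.2.2

theorem count_one_zero (hIJ : ∀ a, a ∈ J ↔ a ∉ I) (hk : 0 < k) : count I J k 1 0 = #J := by
  rw [count, Nat.card_subtype_list_cons J (R := (· = [])) (by simp [Admissible])]
  · simp
  · rintro a (_ | ⟨b, t⟩)
    · by_cases ha : a ∈ I <;>
        simp [Admissible, hIJ, leadingRun_cons, noRun_cons, noRun_nil hk, ha, hk]
    · simp [Admissible]

theorem count_succ_zero [Finite α] (hIJ : ∀ a, a ∈ J ↔ a ∉ I) (hk : 0 < k) {n : ℕ}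
    (hn : n ≠ 0) : count I J k (n + 1) 0 = #J * ∑ j ∈ range k, count I J k n j := by
  rw [← card_admissible_eq_sum_count hk, count]
  refine Nat.card_subtype_list_cons J (by simp [Admissible]) fun a t => ?_
  rcases eq_or_ne t [] with rfl | ht
  · simp [Admissible, hn, hn.symm]
  · by_cases ha : a ∈ I <;> simp [admissible_succ_cons ht, leadingRun_cons, ha, hIJ, hk]

theorem count_succ_succ {n j : ℕ} (hn : n ≠ 0) (hj : j + 1 < k) :
    count I J k (n + 1) (j + 1) = #I * count I J k n j := by
  refine Nat.card_subtype_list_cons I (by simp [Admissible]) fun a t => ?_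
  rcases eq_or_ne t [] with rfl | ht
  · simp [Admissible, hn, hn.symm]
  · by_cases ha : a ∈ I
    · simp only [admissible_succ_cons ht, leadingRun_cons, ha, if_true, Nat.add_right_cancel_iff]
      grind
    · simp [leadingRun_cons, ha]

theorem count_add_eq_pow_mul {n j : ℕ} (hn : n ≠ 0) (hj : j < k) :
    count I J k (n + j) j = #I ^ j * count I J k n 0 := by
  induction j with
  | zero => simp
  | succ j ih =>
    rw [← add_assoc, count_succ_succ (by omega) hj, ih (by omega), pow_succ']
    ring

theorem count_eq_zero (hIJ : ∀ a, a ∈ J ↔ a ∉ I) {m j : ℕ} (hj : j ≠ 0) (hm : m ≤ j) :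
    count I J k m j = 0 := by
  refine Nat.card_eq_zero.mpr (Or.inl (isEmpty_subtype _ |>.mpr ?_))
  rintro w ⟨⟨hlen, hlast, -⟩, hlead⟩
  have hrun := leadingRun_le_length (I := I) w
  obtain ⟨b, hb⟩ : ∃ b, w.getLast? = some b :=
    Option.isSome_iff_exists.mp (List.getLast?_isSome.mpr (List.ne_nil_of_length_pos (by omega)))
  have hbI : b ∈ I :=
    (forall_mem_iff_length_le_leadingRun (List.prefix_refl w)).mpr (by omega) b
      (List.mem_of_getLast? hb)
  exact (hIJ b).mp (hlast b hb) hbI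

theorem succ_eq_sum_of_eq_count [Finite α] (hIJ : ∀ a, a ∈ J ↔ a ∉ I) (hk : 0 < k)
    {u : ℕ → ℕ} (h0 : u 0 = 0) (hu : ∀ n ≠ 0, u n = count I J k n 0) {n : ℕ} (hn : n ≠ 0) :
    u (n + 1) = #J * ∑ j ∈ range k, #I ^ j * u (n - j) := by
  rw [hu _ n.succ_ne_zero, count_succ_zero hIJ hk hn]
  refine congrArg _ (sum_congr rfl fun j hj => ?_)
  rcases lt_or_ge j n with hjn | hnj
  · rw [hu _ (by omega), ← count_add_eq_pow_mul (by omega) (mem_range.mp hj),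
      Nat.sub_add_cancel hjn.le]
  · rw [count_eq_zero hIJ (by omega) hnj, Nat.sub_eq_zero_of_le hnj, h0, mul_zero]

theorem iff_admissible_and_leadingRun_eq_zero (hIJ : ∀ a, a ∈ J ↔ a ∉ I) {m : ℕ} (hm : m ≠ 0)
    (d : α) (w : List α) :
    (w.length = m ∧ w.getD 0 d ∈ J ∧ w.getD (m - 1) d ∈ J ∧ NoRun I k w) ↔
      Admissible I J k m w ∧ leadingRun I w = 0 := by
  rcases w with _ | ⟨a, t⟩
  · simp [Admissible, hm.symm]
  · rcases eq_or_ne (t.length + 1) m with rfl | hlen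
    · have hlast : (a :: t)[t.length]? = (a :: t).getLast? := by
        rw [List.getLast?_eq_getElem?, List.length_cons, Nat.add_sub_cancel]
      simp only [List.getD_eq_getElem?_getD, Nat.add_sub_cancel, hlast]
      simp [Admissible, List.getLast?_cons, leadingRun_cons, hIJ, and_comm]
    · simp [Admissible, hlen]

end RunFreeWords

open RunFreeWords

/-- For `k ≥ 2`, the generating function of the numbers `u n` of words of
length `n` over `ℤ_q` starting and ending with a letter from `J` and containing no `k`
consecutive letters from `I` satisfies
`(1 - qx + |I|^k|J|x^{k+1}) · ∑_{n ≥ 0} u n x^n = |J|x(1 - |I|x)`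
as formal power series. -/
theorem stmt8 (q k : ℕ) (hq : 2 ≤ q) (hk : 2 ≤ k)
    (I J : Finset (Fin q))
    (hd : Disjoint I J) (hun : I ∪ J = Finset.univ)
    (u : ℕ → ℕ) (h0 : u 0 = 0)
    (hcard : ∀ m : ℕ, 1 ≤ m → u m = Nat.card {w : List (Fin q) //
      w.length = m ∧ w.getD 0 ⟨0, by omega⟩ ∈ J ∧ w.getD (m - 1) ⟨0, by omega⟩ ∈ J ∧
      ¬ ∃ v : List (Fin q), v.length = k ∧ (∀ a ∈ v, a ∈ I) ∧ v <:+: w}) :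
    (1 - C (q : ℤ) * X + C ((I.card : ℤ) ^ k * J.card) * X ^ (k + 1)) *
        PowerSeries.mk (fun n => (u n : ℤ)) =
      C (J.card : ℤ) * X * (1 - C (I.card : ℤ) * X) := by
  have hIJ : ∀ a, a ∈ J ↔ a ∉ I := fun a =>
    ⟨fun ha hI => disjoint_left.mp hd hI ha, (mem_union.mp (hun ▸ mem_univ a)).resolve_left⟩
  have hu : ∀ n ≠ 0, u n = count I J k n 0 := fun n hn => by
    rw [hcard n (by omega)]
    exact Nat.card_congr (Equiv.subtypeEquivRight
      (iff_admissible_and_leadingRun_eq_zero hIJ hn _))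
  have hq' : (q : ℤ) = #I + #J := by
    rw [← Nat.cast_add, ← card_union_of_disjoint hd, hun, card_univ, Fintype.card_fin]
  rw [hq']
  refine mul_mk_eq_of_recurrence _ _ k (by simp [h0]) ?_ fun n hn => ?_
  · rw [hu 1 one_ne_zero, count_one_zero hIJ (by omega)]
  · exact_mod_cast succ_eq_sum_of_eq_count hIJ (by omega) h0 hu hn
end

section
/- When n divides q, |I| = q/n, and k = 1, the code S_{I,J}^{(1)}(n) = I \times J^{n-1} has size ((n-1)/n)^{n-1} q^n / n, achieving Levenshtein's upper bound. -/
/-!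
A word of the code is a free choice of a first letter in `I` and of `n - 1` letters in `J`,
so the code has `|I| |J|^(n-1) = (q/n) ((n-1) q/n)^(n-1)` elements, which is Levenshtein's bound
rewritten.
-/

open Finset

def listLengthForallMemEquivVector {α : Type*} (J : Finset α) (m : ℕ) :
    {t : List α // t.length = m ∧ ∀ x ∈ t, x ∈ J} ≃ List.Vector J m where
  toFun t := ⟨t.1.pmap Subtype.mk t.2.2, by simp [t.2.1]⟩
  invFun v := ⟨v.1.map Subtype.val, by simp, List.forall_mem_map.2 fun y _ => y.2⟩
  left_inv t := Subtype.ext <| by simp [List.map_pmap]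
  right_inv v := Subtype.ext <| List.pmap_map .. |>.trans <| List.pmap_eq_self.2 fun _ _ => rfl

theorem card_list_length_forall_mem {α : Type*} (J : Finset α) (m : ℕ) :
    Nat.card {t : List α // t.length = m ∧ ∀ x ∈ t, x ∈ J} = #J ^ m := by
  simp [Nat.card_congr (listLengthForallMemEquivVector J m)]

def listLengthSuccEquiv {α : Type*} (d : α) (p : α → Prop) (s : List α → Prop) (m : ℕ) :
    {w : List α // w.length = m + 1 ∧ p (w.getD 0 d) ∧ s (w.drop 1)} ≃
      {a // p a} × {t : List α // t.length = m ∧ s t} where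
  toFun w := (⟨w.1.getD 0 d, w.2.2.1⟩, ⟨w.1.drop 1, by simp [w.2.1], w.2.2.2⟩)
  invFun x := ⟨x.1.1 :: x.2.1, by simp [x.2.2.1], by simpa using x.1.2, by simpa using x.2.2.2⟩
  left_inv := by
    rintro ⟨_ | ⟨a, t⟩, hl, -⟩
    · simp at hl
    · rfl
  right_inv _ := rfl

theorem card_list_head_mem_tail_forall_mem {α : Type*} (d : α) (I J : Finset α) (m : ℕ) :
    Nat.card {w : List α //
        w.length = m + 1 ∧ w.getD 0 d ∈ I ∧ ∀ x ∈ w.drop 1, x ∈ J} = #I * #J ^ m := by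
  rw [Nat.card_congr (listLengthSuccEquiv d (· ∈ I) (fun t => ∀ x ∈ t, x ∈ J) m), Nat.card_prod,
    card_list_length_forall_mem]
  simp

theorem div_pow_mul_mul_pow_succ_div {x : ℝ} (hx : x ≠ 0) (r : ℝ) (k : ℕ) :
    ((x - 1) / x) ^ k * (x * r) ^ (k + 1) / x = r * ((x - 1) * r) ^ k := by
  rw [div_pow, mul_pow, mul_pow, pow_succ, pow_succ]
  field_simp

/-- When `n` divides `q`, `|I| = q/n`, and `k = 1`, the code
`S_{I,J}^{(1)}(n) = I × J^{n-1}` has size `((n-1)/n)^{n-1} qⁿ / n`, achieving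
Levenshtein's upper bound. -/
theorem stmt10 (n q : ℕ) (hq : 2 ≤ q) (hdvd : n ∣ q)
    (I J : Finset (Fin q)) (hd : Disjoint I J) (hun : I ∪ J = Finset.univ)
    (hIcard : I.card = q / n) :
    (Nat.card {w : List (Fin q) //
        w.length = n ∧ w.getD 0 ⟨0, by omega⟩ ∈ I ∧ ∀ x ∈ w.drop 1, x ∈ J} : ℝ) =
      ((n - 1 : ℝ) / n) ^ (n - 1) * q ^ n / n := by
  obtain ⟨r, rfl⟩ := hdvd
  obtain ⟨k, rfl⟩ : ∃ k, n = k + 1 := Nat.exists_eq_succ_of_ne_zero (by rintro rfl; omega)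
  have hI : #I = r := by rw [hIcard, Nat.mul_div_cancel_left _ k.succ_pos]
  have hJ : #J = k * r := by
    have hIJ := card_union_of_disjoint hd
    rw [hun, card_univ, Fintype.card_fin] at hIJ
    lia
  rw [card_list_head_mem_tail_forall_mem, hI, hJ, Nat.add_sub_cancel]
  push_cast
  rw [div_pow_mul_mul_pow_succ_div (by positivity)]
  ring
end

section
/- For |I| = |J| = q/2 and k > 1, the limit superior of |S_{I,J}^{(k)}(n)|^{1/n} as n \to \infty equals (q/2) \cdot y_0, where y_0 is the unique positive real root of y^{k} - \sum_{i=0}^{k-1} y^i = 0. -/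
namespace Stmt11

instance finite_length_eq (α : Type*) [Finite α] (n : ℕ) :
    Finite {l : List α // l.length = n} := by
  refine Finite.of_injective (fun l => (fun i : Fin n => l.1.get (Fin.cast l.2.symm i))) ?_
  rintro ⟨l1, rfl⟩ ⟨l2, h2⟩ h
  refine Subtype.ext (List.ext_getElem h2.symm fun i hi1 hi2 => ?_)
  have := congrFun h ⟨i, hi1⟩
  simpa [List.get_eq_getElem] using this

open List

def str2 : List ℕ → List Bool
  | [] => []
  | p :: L => List.replicate (p-1) true ++ false :: str2 L

lemma str2_length {L : List ℕ} (h : ∀ p ∈ L, 1 ≤ p) : (str2 L).length = L.sum := by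
  induction L with
  | nil => simp [str2]
  | cons p L ih =>
    have hp : 1 ≤ p := h p (by simp)
    simp [str2, ih (fun q hq => h q (by simp [hq]))]
    omega

lemma rep_eq {a b : ℕ} {u v : List Bool}
    (h : List.replicate a true ++ false :: u = List.replicate b true ++ false :: v) :
    a = b ∧ u = v := by
  induction a generalizing b with
  | zero =>
    cases b with
    | zero => simpa using h
    | succ b => simp [List.replicate_succ] at h
  | succ a ih =>
    cases b with
    | zero => simp [List.replicate_succ] at h
    | succ b =>
      simp only [List.replicate_succ, List.cons_append, List.cons.injEq] at h
      obtain ⟨hab, hu⟩ := ih h.2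
      exact ⟨by omega, hu⟩

lemma str2_injOn {L₁ L₂ : List ℕ} (h1 : ∀ p ∈ L₁, 1 ≤ p) (h2 : ∀ p ∈ L₂, 1 ≤ p)
    (h : str2 L₁ = str2 L₂) : L₁ = L₂ := by
  induction L₁ generalizing L₂ with
  | nil =>
    cases L₂ with
    | nil => rfl
    | cons p L => simp [str2] at h
  | cons p L ih =>
    cases L₂ with
    | nil => simp [str2] at h
    | cons p' L' =>
      simp only [str2] at h
      obtain ⟨hpp, hLL⟩ := rep_eq h
      have : p = p' := by
        have := h1 p (by simp); have := h2 p' (by simp); omega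
      rw [this, ih (fun q hq => h1 q (by simp [hq])) (fun q hq => h2 q (by simp [hq])) hLL]

lemma str2_ne_nil {p : ℕ} {L : List ℕ} : str2 (p :: L) ≠ [] := by
  simp [str2]

lemma str2_getLast? {L : List ℕ} (h : L ≠ []) : (str2 L).getLast? = some false := by
  induction L with
  | nil => simp at h
  | cons p L ih =>
    cases L with
    | nil =>
      have : str2 [p] = List.replicate (p-1) true ++ [false] := by simp [str2]
      rw [this, List.getLast?_concat]
    | cons q L' =>
      have h2 : str2 (p :: q :: L') = (List.replicate (p-1) true ++ [false]) ++ str2 (q :: L') := by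
        simp [str2]
      rw [h2, List.getLast?_append_of_ne_nil _ str2_ne_nil, ih (by simp)]

lemma suffix_str2 {L : List ℕ} (hk : 1 ≤ k) (hL : ∀ p ∈ L, p ≤ k) {u : List Bool}
    (hu : u <:+ str2 L) :
    u = [] ∨ ∃ j t, j < k ∧ u = List.replicate j true ++ false :: t := by
  induction L generalizing u with
  | nil => left; simpa [str2] using hu
  | cons p L ih =>
    obtain ⟨w, hw⟩ := hu
    rw [str2] at hw
    rcases List.append_eq_append_iff.1 hw with ⟨a', ha1, ha2⟩ | ⟨c', hc1, hc2⟩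
    · -- u = a' ++ false :: str2 L with a' a suffix of the replicate
      have hsuf : a' <:+ List.replicate (p-1) true := ⟨w, ha1.symm⟩
      have hc'' : a' = List.replicate a'.length true := by
        rw [List.eq_replicate_iff]
        exact ⟨rfl, fun b hb => List.eq_of_mem_replicate (hsuf.sublist.subset hb)⟩
      have hlen : a'.length ≤ p - 1 := by
        have := hsuf.length_le; simpa using this
      right
      refine ⟨a'.length, str2 L, ?_, ?_⟩
      · have := hL p (by simp); omega
      · rw [ha2, hc'']; simp
    · -- u is a suffix of false :: str2 L
      have hsuf : u <:+ false :: str2 L := ⟨c', hc2.symm⟩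
      rcases List.suffix_cons_iff.1 hsuf with h | h
      · right; exact ⟨0, str2 L, hk, by simpa using h⟩
      · exact ih (fun q hq => hL q (by simp [hq])) h

lemma str2_no_run {L : List ℕ} (hk : 1 ≤ k) (hL : ∀ p ∈ L, p ≤ k) :
    ¬ List.replicate k true <:+: str2 L := by
  intro hinf
  obtain ⟨u, hpre, hsuf⟩ := List.infix_iff_prefix_suffix.1 hinf
  rcases suffix_str2 hk hL hsuf with rfl | ⟨j, t, hj, rfl⟩
  · have := hpre.length_le; simp at this; omega
    
  · have hj' : j < (List.replicate k true).length := by simpa using hj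
    have := hpre.getElem hj'
    have h1 : (List.replicate j true ++ false :: t)[j]'(by simp) = false := by
      rw [List.getElem_append_right (by simp)]
      simp
    rw [h1] at this
    simp at this

lemma str2_mem_infix {L : List ℕ} {p : ℕ} (hp : p ∈ L) :
    List.replicate (p-1) true <:+: str2 L := by
  induction L with
  | nil => simp at hp
  | cons q L ih =>
    rcases List.mem_cons.1 hp with rfl | hp'
    · exact (List.prefix_append _ _ : _ <+: str2 (p :: L)).isInfix
    · refine (ih hp').trans ?_
      have : str2 L <:+ str2 (q :: L) := by
        rw [str2]
        exact ((List.suffix_cons false _).trans (List.suffix_append _ _))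
      exact this.isInfix

lemma parse_exists {s : List Bool} (hne : s ≠ []) (hlast : s.getLast? = some false) :
    ∃ L, (∀ p ∈ L, 1 ≤ p) ∧ s = str2 L := by
  induction s with
  | nil => simp at hne
  | cons b t ih =>
    cases t with
    | nil =>
      simp at hlast
      subst hlast
      exact ⟨[1], by simp, by simp [str2]⟩
    | cons c t' =>
      rw [List.getLast?_cons_cons] at hlast
      obtain ⟨L, hL1, hL2⟩ := ih (by simp) hlast
      cases L with
      | nil => simp [str2] at hL2
      | cons p L' =>
        cases b with
        | false =>
          refine ⟨1 :: p :: L', ?_, by simp [str2, hL2]⟩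
          intro x hx
          rcases List.mem_cons.1 hx with rfl | h
          · omega
          · exact hL1 x h
        | true =>
          refine ⟨(p+1) :: L', ?_, ?_⟩
          · intro x hx; rcases List.mem_cons.1 hx with rfl | h
            · omega
            · exact hL1 x (by simp [h])
          · have hp : 1 ≤ p := hL1 p (by simp)
            simp only [str2] at hL2 ⊢
            rw [hL2]
            have : p + 1 - 1 = (p - 1) + 1 := by omega
            rw [this, List.replicate_succ]
            simp


open List


def Comp (k n : ℕ) : Type := {L : List ℕ // (∀ p ∈ L, 1 ≤ p ∧ p ≤ k) ∧ L.sum = n}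

instance comp_finite (k n : ℕ) : Finite (Comp k n) := by
  refine Finite.of_injective
    (fun L => (⟨str2 L.1, by rw [str2_length (fun p hp => (L.2.1 p hp).1), L.2.2]⟩ :
      {s : List Bool // s.length = n})) ?_
  intro ⟨L1, h1⟩ ⟨L2, h2⟩ h
  simp only [Subtype.mk.injEq] at h
  exact Subtype.ext (str2_injOn (fun p hp => (h1.1 p hp).1) (fun p hp => (h2.1 p hp).1) h)

noncomputable def D (k n : ℕ) : ℕ := Nat.card (Comp k n)

lemma D_zero (k : ℕ) : D k 0 = 1 := by
  rw [D, Nat.card_eq_one_iff_unique]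
  constructor
  · constructor
    intro ⟨L1, h1⟩ ⟨L2, h2⟩
    have e1 : L1 = [] := by
      cases L1 with
      | nil => rfl
      | cons p L => exfalso; have := (h1.1 p (by simp)).1; have := h1.2; simp at this; omega
    have e2 : L2 = [] := by
      cases L2 with
      | nil => rfl
      | cons p L => exfalso; have := (h2.1 p (by simp)).1; have := h2.2; simp at this; omega
    subst e1; subst e2; rfl
  · exact ⟨⟨[], by simp⟩⟩

lemma D_pos (k n : ℕ) (hk : 1 ≤ k) : 1 ≤ D k n := by
  have : Nonempty (Comp k n) := ⟨⟨List.replicate n 1, ⟨fun p hp => by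
    rcases List.eq_of_mem_replicate hp with rfl; omega, by simp⟩⟩⟩
  exact Nat.card_pos

lemma nat_card_sigma {ι : Type*} [Fintype ι] {β : ι → Type*} [∀ i, Finite (β i)] :
    Nat.card (Σ i, β i) = ∑ i, Nat.card (β i) := by
  letI : ∀ i, Fintype (β i) := fun i => Fintype.ofFinite _
  simp [Nat.card_eq_fintype_card, Fintype.card_sigma]

def CompF (k n : ℕ) (i : Fin k) : Type :=
  {L : List ℕ // (i:ℕ)+1 ≤ n ∧ (∀ p ∈ L, 1 ≤ p ∧ p ≤ k) ∧ L.sum = n - ((i:ℕ)+1)}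

instance compF_finite (k n : ℕ) (i : Fin k) : Finite (CompF k n i) := by
  haveI : Finite {L : List ℕ // (∀ p ∈ L, 1 ≤ p ∧ p ≤ k) ∧ L.sum = n - ((i:ℕ)+1)} :=
    comp_finite k _
  refine Finite.of_injective
    (fun L : CompF k n i =>
      (⟨L.1, L.2.2⟩ : {L : List ℕ // (∀ p ∈ L, 1 ≤ p ∧ p ≤ k) ∧ L.sum = n - ((i:ℕ)+1)})) ?_
  intro a b h
  simp only [Subtype.mk.injEq] at h
  exact Subtype.ext h

def consMap (k n : ℕ) (x : Σ i : Fin k, CompF k n i) : Comp k n :=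
  ⟨((x.1:ℕ)+1) :: x.2.1, by
    obtain ⟨h1, h2, h3⟩ := x.2.2
    refine ⟨?_, ?_⟩
    · intro p hp
      rcases List.mem_cons.1 hp with rfl | hp'
      · have := x.1.2; omega
      · exact h2 p hp'
    · simp [h3]; omega⟩

lemma consMap_bijective (k n : ℕ) (hn : 1 ≤ n) : Function.Bijective (consMap k n) := by
  constructor
  · intro x y h
    obtain ⟨i, Lx⟩ := x
    obtain ⟨j, Ly⟩ := y
    have hval : ((i:ℕ)+1) :: Lx.1 = ((j:ℕ)+1) :: Ly.1 := congrArg Subtype.val h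
    simp only [List.cons.injEq] at hval
    have hij : i = j := Fin.ext (by omega)
    subst hij
    exact congrArg (Sigma.mk i) (Subtype.ext hval.2)
  · rintro ⟨L, hL⟩
    cases L with
    | nil => exfalso; have := hL.2; simp at this; omega
    | cons p L' =>
      have hp1 : 1 ≤ p := (hL.1 p (by simp)).1
      have hpk : p ≤ k := (hL.1 p (by simp)).2
      have hsum : p + L'.sum = n := by have := hL.2; simpa using this
      refine ⟨⟨⟨p-1, by omega⟩, ⟨L', ?_, fun q hq => hL.1 q (by simp [hq]), ?_⟩⟩, ?_⟩
      · simp; omega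
      · simp; omega
      · apply Subtype.ext
        simp [consMap]
        omega

lemma D_rec (k n : ℕ) (hn : 1 ≤ n) :
    D k n = ∑ i : Fin k, if (i:ℕ)+1 ≤ n then D k (n - ((i:ℕ)+1)) else 0 := by
  classical
  rw [D, ← Nat.card_congr (Equiv.ofBijective _ (consMap_bijective k n hn)), nat_card_sigma]
  refine Finset.sum_congr rfl fun i _ => ?_
  by_cases hi : (i:ℕ)+1 ≤ n
  · rw [if_pos hi, D]
    exact Nat.card_congr (Equiv.subtypeEquivRight fun L => by tauto)
  · rw [if_neg hi]
    have : IsEmpty (CompF k n i) := ⟨fun L => hi L.2.1⟩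
    simp [Nat.card_of_isEmpty]

variable {k : ℕ} {y₀ : ℝ}


lemma sum_inv_pow (hk : 1 ≤ k) (hy : 1 < y₀)
    (hroot : y₀ ^ k = ∑ i ∈ Finset.range k, y₀ ^ i) :
    ∑ i : Fin k, (y₀⁻¹) ^ ((i:ℕ)+1) = 1 := by
  have hy0 : (0:ℝ) < y₀ := by linarith
  have hpow : (0:ℝ) < y₀ ^ k := pow_pos hy0 k
  have key : y₀ ^ k * (∑ i : Fin k, (y₀⁻¹) ^ ((i:ℕ)+1)) = y₀ ^ k := by
    rw [Finset.mul_sum]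
    have hterm : ∀ i : Fin k, y₀ ^ k * (y₀⁻¹) ^ ((i:ℕ)+1) = y₀ ^ (k - ((i:ℕ)+1)) := by
      intro i
      have hik : (i:ℕ) + 1 ≤ k := i.2
      have hsplit : y₀ ^ k = y₀ ^ (k - ((i:ℕ)+1)) * y₀ ^ ((i:ℕ)+1) := by
        rw [← pow_add]; congr 1; omega
      rw [hsplit, inv_pow, mul_assoc, mul_inv_cancel₀ (by positivity), mul_one]
    rw [Finset.sum_congr rfl (fun i _ => hterm i), Fin.sum_univ_eq_sum_range
      (fun i => y₀ ^ (k - (i+1)))]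
    have : ∀ i ∈ Finset.range k, y₀ ^ (k - (i+1)) = y₀ ^ (k - 1 - i) := by
      intro i hi; congr 1; omega
    rw [Finset.sum_congr rfl this, Finset.sum_range_reflect (fun j => y₀ ^ j) k, ← hroot]
  nlinarith [key, hpow]


lemma D_le_pow (hk : 1 ≤ k) (hy : 1 < y₀)
    (hroot : y₀ ^ k = ∑ i ∈ Finset.range k, y₀ ^ i) :
    ∀ n, (D k n : ℝ) ≤ y₀ ^ n := by
  have hy0 : (0:ℝ) < y₀ := by linarith
  intro n
  induction n using Nat.strong_induction_on with
  | _ n ih =>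
    rcases Nat.eq_zero_or_pos n with rfl | hn
    · simp [D_zero]
    · rw [D_rec k n hn]
      push_cast
      have hterm : ∀ i : Fin k,
          ((if (i:ℕ)+1 ≤ n then (D k (n - ((i:ℕ)+1)) : ℝ) else 0)) ≤
            y₀ ^ n * (y₀⁻¹) ^ ((i:ℕ)+1) := by
        intro i
        by_cases hi : (i:ℕ)+1 ≤ n
        · rw [if_pos hi]
          have h1 : (D k (n - ((i:ℕ)+1)) : ℝ) ≤ y₀ ^ (n - ((i:ℕ)+1)) :=
            ih _ (by omega)
          have h2 : y₀ ^ (n - ((i:ℕ)+1)) = y₀ ^ n * (y₀⁻¹) ^ ((i:ℕ)+1) := by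
            rw [inv_pow, eq_comm, mul_inv_eq_iff_eq_mul₀ (by positivity), ← pow_add]
            congr 1; omega
          linarith
        · rw [if_neg hi]; positivity
      calc ∑ i : Fin k, ((if (i:ℕ)+1 ≤ n then (D k (n - ((i:ℕ)+1)) : ℝ) else 0))
          ≤ ∑ i : Fin k, y₀ ^ n * (y₀⁻¹) ^ ((i:ℕ)+1) :=
            Finset.sum_le_sum (fun i _ => hterm i)
        _ = y₀ ^ n := by
            rw [← Finset.mul_sum, sum_inv_pow hk hy hroot, mul_one]

lemma pow_le_D (hk : 1 ≤ k) (hy : 1 < y₀)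
    (hroot : y₀ ^ k = ∑ i ∈ Finset.range k, y₀ ^ i) :
    ∀ n, y₀ ^ n ≤ y₀ ^ k * D k n := by
  have hy0 : (0:ℝ) < y₀ := by linarith
  intro n
  induction n using Nat.strong_induction_on with
  | _ n ih =>
    by_cases hnk : n < k
    · have h1 : y₀ ^ n ≤ y₀ ^ k := pow_le_pow_right₀ (by linarith) (by omega)
      have h2 : (1:ℝ) ≤ (D k n : ℝ) := by
        exact_mod_cast Nat.one_le_cast.mpr (D_pos k n hk)
      nlinarith [pow_pos hy0 k]
    · push_neg at hnk
      have hn : 1 ≤ n := by omega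
      rw [D_rec k n hn]
      push_cast
      rw [Finset.mul_sum]
      have hterm : ∀ i : Fin k,
          y₀ ^ n * (y₀⁻¹) ^ ((i:ℕ)+1) ≤
            y₀ ^ k * ((if (i:ℕ)+1 ≤ n then (D k (n - ((i:ℕ)+1)) : ℝ) else 0)) := by
        intro i
        have hi : (i:ℕ)+1 ≤ n := by have := i.2; omega
        rw [if_pos hi]
        have h1 : y₀ ^ (n - ((i:ℕ)+1)) ≤ y₀ ^ k * (D k (n - ((i:ℕ)+1)) : ℝ) :=
          ih _ (by omega)
        have h2 : y₀ ^ n * (y₀⁻¹) ^ ((i:ℕ)+1) = y₀ ^ (n - ((i:ℕ)+1)) := by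
          rw [inv_pow, mul_inv_eq_iff_eq_mul₀ (by positivity), ← pow_add]
          congr 1; omega
        linarith
      calc y₀ ^ n = ∑ i : Fin k, y₀ ^ n * (y₀⁻¹) ^ ((i:ℕ)+1) := by
            rw [← Finset.mul_sum, sum_inv_pow hk hy hroot, mul_one]
        _ ≤ _ := Finset.sum_le_sum (fun i _ => hterm i)




instance finite_length_prop (α : Type*) [Finite α] (n : ℕ) (Q : List α → Prop) :
    Finite {l : List α // l.length = n ∧ Q l} := by
  refine Finite.of_injective
    (fun l => (⟨l.1, l.2.1⟩ : {l : List α // l.length = n})) ?_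
  intro a b h
  simp only [Subtype.mk.injEq] at h
  exact Subtype.ext h

instance finite_map_eq {α β : Type*} [Finite α] (f : α → β) (p : List β) :
    Finite {w : List α // w.map f = p} := by
  refine Finite.of_injective
    (fun w => (⟨w.1, by rw [← List.length_map f, w.2]⟩ :
      {l : List α // l.length = p.length})) ?_
  intro a b h
  simp only [Subtype.mk.injEq] at h
  exact Subtype.ext h


lemma card_map_fiber {α : Type*} [Finite α] (f : α → Bool) (c : ℕ)
    (hc : ∀ b : Bool, Nat.card {x : α // f x = b} = c) :
    ∀ p : List Bool, Nat.card {w : List α // w.map f = p} = c ^ p.length := by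
  intro p
  induction p with
  | nil =>
    simp only [List.length_nil, pow_zero]
    rw [Nat.card_eq_one_iff_unique]
    refine ⟨⟨fun a b => ?_⟩, ⟨⟨[], by simp⟩⟩⟩
    have ha : a.1 = [] := by simpa using a.2
    have hb : b.1 = [] := by simpa using b.2
    exact Subtype.ext (ha.trans hb.symm)
  | cons b p ih =>
    have hbij : Function.Bijective
        (fun x : {x : α // f x = b} × {w : List α // w.map f = p} =>
          (⟨x.1.1 :: x.2.1, by simp [x.1.2, x.2.2]⟩ : {w : List α // w.map f = b :: p})) := by
      constructor
      · intro x y h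
        simp only [Subtype.mk.injEq, List.cons.injEq] at h
        exact Prod.ext (Subtype.ext h.1) (Subtype.ext h.2)
      · rintro ⟨w, hw⟩
        cases w with
        | nil => simp at hw
        | cons a w' =>
          simp only [List.map_cons, List.cons.injEq] at hw
          exact ⟨⟨⟨a, hw.1⟩, ⟨w', hw.2⟩⟩, rfl⟩
    rw [← Nat.card_congr (Equiv.ofBijective _ hbij), Nat.card_prod, hc, ih]
    simp [pow_succ, mul_comm]

lemma card_list_prop {α : Type*} [Finite α] (f : α → Bool) (c : ℕ)
    (hc : ∀ b : Bool, Nat.card {x : α // f x = b} = c) (m : ℕ) (Q : List Bool → Prop) :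
    Nat.card {w : List α // w.length = m ∧ Q (w.map f)} =
      Nat.card {p : List Bool // p.length = m ∧ Q p} * c ^ m := by
  classical
  have hbij2 : Function.Bijective
      (fun w : {w : List α // w.length = m ∧ Q (w.map f)} =>
        (⟨⟨w.1.map f, by simp [w.2.1], w.2.2⟩, ⟨w.1, rfl⟩⟩ :
          Σ p : {p : List Bool // p.length = m ∧ Q p}, {w : List α // w.map f = p.1})) := by
    constructor
    · intro x y h
      have := congrArg (fun z : (Σ p : {p : List Bool // p.length = m ∧ Q p},
        {w : List α // w.map f = p.1}) => z.2.1) h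
      exact Subtype.ext this
    · intro x
      obtain ⟨p', w'⟩ := x
      obtain ⟨p, hp⟩ := p'
      obtain ⟨w, hw⟩ := w'
      have hw' : List.map f w = p := hw
      subst hw'
      exact ⟨⟨w, ⟨by simpa using hp.1, hp.2⟩⟩, rfl⟩
  rw [Nat.card_congr (Equiv.ofBijective _ hbij2)]
  letI : Fintype {p : List Bool // p.length = m ∧ Q p} := Fintype.ofFinite _
  rw [nat_card_sigma]
  have : ∀ p : {p : List Bool // p.length = m ∧ Q p},
      Nat.card {w : List α // w.map f = p.1} = c ^ m := by
    intro p
    rw [card_map_fiber f c hc, p.2.1]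
  rw [Finset.sum_congr rfl (fun p _ => this p), Finset.sum_const, smul_eq_mul,
    Finset.card_univ, Nat.card_eq_fintype_card]


lemma infix_map_pull {α β : Type*} {f : α → β} {t : List β} {l : List α}
    (h : t <:+: l.map f) : ∃ v, v <:+: l ∧ v.map f = t := by
  obtain ⟨x, y, hxy⟩ := h
  obtain ⟨l1, l2, hl, hm1, hm2⟩ := List.map_eq_append_iff.1 hxy.symm
  obtain ⟨l11, l12, hl1, hm11, hm12⟩ := List.map_eq_append_iff.1 hm1
  exact ⟨l12, ⟨l11, l2, by rw [hl, hl1]⟩, hm12⟩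

def Qpred (k m : ℕ) (p : List Bool) : Prop :=
  (∀ b ∈ p.take k, b = true) ∧ p.getD k false = false ∧ p.getD (m-1) false = false ∧
    ¬ List.replicate k true <:+: p.drop k

lemma cprof_lower (k m : ℕ) (hk : 1 ≤ k) (hm : k+1 ≤ m) :
    D k (m-k-1) ≤ Nat.card {p : List Bool // p.length = m ∧ Qpred k m p} := by
  have hparts : ∀ (L : Comp k (m-k-1)) (p' : ℕ), p' ∈ 1 :: L.1 → 1 ≤ p' := by
    rintro L p' hp'
    rcases List.mem_cons.1 hp' with rfl | h
    · omega
    · exact (L.2.1 p' h).1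
  have hlen : ∀ L : Comp k (m-k-1), (str2 (1 :: L.1)).length = m - k := by
    intro L
    rw [str2_length (hparts L)]
    simp [L.2.2]
    omega
  refine Nat.card_le_card_of_injective
    (fun L => ⟨List.replicate k true ++ str2 (1 :: L.1), ?_, ?_, ?_, ?_, ?_⟩) ?_
  · -- length
    simp [hlen L]
    omega
  · -- take k all true
    rw [List.take_left' (by simp)]
    intro b hb
    exact (List.mem_replicate.1 hb).2
  · -- getD k
    rw [List.getD_eq_getElem _ _ (by simp [hlen L]; omega),
      List.getElem_append_right (by simp)]
    have hs : str2 (1 :: L.1) = false :: str2 L.1 := by simp [str2]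
    simp [hs]
  · -- getD (m-1)
    rw [List.getD_eq_getElem _ _ (by simp [hlen L]; omega),
      List.getElem_append_right (by simp; omega)]
    have hidx : m - 1 - (List.replicate k true).length = (str2 (1 :: L.1)).length - 1 := by
      simp [hlen L]; omega
    refine Option.some.inj ?_
    rw [← List.getElem?_eq_getElem (by simp [hlen L]; omega :
      m - 1 - (List.replicate k true).length < (str2 (1 :: L.1)).length), hidx,
      ← List.getLast?_eq_getElem?]
    exact str2_getLast? (by simp)
  · -- no run
    rw [List.drop_left' (by simp)]
    refine str2_no_run hk ?_
    rintro p' hp'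
    rcases List.mem_cons.1 hp' with rfl | h
    · omega
    · exact (L.2.1 p' h).2
  · -- injective
    intro A B h
    simp only [Subtype.mk.injEq] at h
    have h2 := List.append_cancel_left h
    have h3 := str2_injOn (hparts A) (hparts B) h2
    exact Subtype.ext (by simpa using h3)

lemma cprof_upper (k m : ℕ) (hk : 1 ≤ k) (hm : k+1 ≤ m) :
    Nat.card {p : List Bool // p.length = m ∧ Qpred k m p} ≤ D k (m-k) := by
  have hex : ∀ p : {p : List Bool // p.length = m ∧ Qpred k m p},
      ∃ L : Comp k (m-k), str2 L.1 = p.1.drop k := by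
    rintro ⟨p, hlen, hQ1, hQ2, hQ3, hQ4⟩
    have hslen : (p.drop k).length = m - k := by simp [hlen]
    have hsne : p.drop k ≠ [] := by
      intro h; rw [h] at hslen; simp at hslen; omega
    have hlast : (p.drop k).getLast? = some false := by
      have hidx : k + ((p.drop k).length - 1) = m - 1 := by rw [hslen]; omega
      rw [List.getLast?_eq_getElem?, List.getElem?_drop, hidx,
        List.getElem?_eq_getElem (by omega : m - 1 < p.length)]
      rw [List.getD_eq_getElem _ _ (by omega : m - 1 < p.length)] at hQ3
      exact congrArg some hQ3
    obtain ⟨L, hL1, hL2⟩ := parse_exists hsne hlast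
    have hLk : ∀ p' ∈ L, p' ≤ k := by
      intro p' hp'
      by_contra hgt
      push_neg at hgt
      have hinf : List.replicate (p'-1) true <:+: p.drop k := hL2 ▸ str2_mem_infix hp'
      have hpre : List.replicate k true <+: List.replicate (p'-1) true :=
        ⟨List.replicate (p'-1-k) true, by rw [← List.replicate_add]; congr 1; omega⟩
      exact hQ4 (hpre.isInfix.trans hinf)
    have hsum : L.sum = m - k := by
      rw [← str2_length hL1, ← hL2, hslen]
    exact ⟨⟨L, fun p' h' => ⟨hL1 p' h', hLk p' h'⟩, hsum⟩, hL2.symm⟩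
  choose F hF using hex
  refine Nat.card_le_card_of_injective F ?_
  intro A B hAB
  apply Subtype.ext
  have hrep : ∀ (X : {p : List Bool // p.length = m ∧ Qpred k m p}),
      X.1 = List.replicate k true ++ X.1.drop k := by
    intro X
    conv_lhs => rw [← List.take_append_drop k X.1]
    congr 1
    rw [List.eq_replicate_iff]
    refine ⟨by simp [X.2.1]; omega, X.2.2.1⟩
  rw [hrep A, hrep B, ← hF A, ← hF B, hAB]

end Stmt11


open Stmt11 Filter



/-- For `|I| = |J| = q/2` and `k > 1`, the limit superior of
`|S_{I,J}^{(k)}(n)|^{1/n}` as `n → ∞` equals `(q/2)·y₀`, where `y₀ ∈ (1,2)` is the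
unique positive real root of `y^k = ∑_{i=0}^{k-1} y^i`. -/
theorem stmt11 (q k : ℕ) (hq : 2 ≤ q) (hqe : Even q) (hk : 2 ≤ k)
    (I J : Finset (Fin q)) (hd : Disjoint I J) (hun : I ∪ J = Finset.univ)
    (hIcard : I.card = q / 2) (hJcard : J.card = q / 2)
    (y₀ : ℝ) (hy₀1 : 1 < y₀) (hy₀2 : y₀ < 2)
    (hroot : y₀ ^ k = ∑ i ∈ Finset.range k, y₀ ^ i)
    (a : ℕ → ℕ)
    (h0 : ∀ m : ℕ, m ≤ k → a m = 0)
    (hcard : ∀ m : ℕ, k + 1 ≤ m → a m = Nat.card {w : List (Fin q) //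
      w.length = m ∧ (∀ x ∈ w.take k, x ∈ I) ∧
      w.getD k ⟨0, by omega⟩ ∈ J ∧ w.getD (m - 1) ⟨0, by omega⟩ ∈ J ∧
      ¬ ∃ v : List (Fin q), v.length = k ∧ (∀ x ∈ v, x ∈ I) ∧ v <:+: w.drop k}) :
    Filter.limsup (fun n : ℕ => ((a n : ℝ)) ^ ((n : ℝ)⁻¹)) Filter.atTop =
      (q / 2 : ℝ) * y₀ := by
  classical
  have hk1 : 1 ≤ k := by omega
  have hy0 : (0:ℝ) < y₀ := by linarith
  set f : Fin q → Bool := fun x => decide (x ∈ I) with hf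
  -- membership translations
  have hmemI : ∀ x : Fin q, (x ∈ I ↔ f x = true) := by
    intro x; simp [hf]
  have hmemJ : ∀ x : Fin q, (x ∈ J ↔ f x = false) := by
    intro x
    have h1 : x ∈ I ∪ J := hun ▸ Finset.mem_univ x
    rw [Finset.mem_union] at h1
    simp only [hf, decide_eq_false_iff_not]
    constructor
    · intro hxJ hxI
      exact Finset.disjoint_left.1 hd hxI hxJ
    · intro hxnI
      tauto
  -- fiber cardinalities
  have hfib : ∀ b : Bool, Nat.card {x : Fin q // f x = b} = q / 2 := by
    intro b
    cases b
    · rw [Nat.card_congr (Equiv.subtypeEquivRight (fun x => (hmemJ x).symm)),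
        Nat.card_eq_fintype_card, Fintype.card_coe]
      exact hJcard
    · rw [Nat.card_congr (Equiv.subtypeEquivRight (fun x => (hmemI x).symm)),
        Nat.card_eq_fintype_card, Fintype.card_coe]
      exact hIcard
  -- key counting identity
  have key : ∀ m : ℕ, k + 1 ≤ m →
      a m = Nat.card {p : List Bool // p.length = m ∧ Qpred k m p} * (q/2)^m := by
    intro m hm
    rw [hcard m hm]
    have hiff : ∀ w : List (Fin q),
        (w.length = m ∧ (∀ x ∈ w.take k, x ∈ I) ∧
          w.getD k ⟨0, by omega⟩ ∈ J ∧ w.getD (m - 1) ⟨0, by omega⟩ ∈ J ∧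
          ¬ ∃ v : List (Fin q), v.length = k ∧ (∀ x ∈ v, x ∈ I) ∧ v <:+: w.drop k) ↔
        (w.length = m ∧ Qpred k m (w.map f)) := by
      intro w
      refine and_congr_right fun hlen => ?_
      have hklt : k < m := by omega
      refine and_congr ?_ (and_congr ?_ (and_congr ?_ ?_))
      · rw [← List.map_take]
        simp only [List.forall_mem_map]
        exact forall₂_congr fun x _ => hmemI x
      · rw [List.getD_eq_getElem _ _ (by omega : k < w.length),
          List.getD_eq_getElem _ _ (by simp [hlen]; omega), List.getElem_map]
        exact hmemJ _
      · rw [List.getD_eq_getElem _ _ (by omega : m - 1 < w.length),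
          List.getD_eq_getElem _ _ (by simp [hlen]; omega), List.getElem_map]
        exact hmemJ _
      · rw [← List.map_drop]
        refine not_congr ?_
        constructor
        · rintro ⟨v, hv1, hv2, hv3⟩
          have hvm : v.map f = List.replicate k true := by
            rw [List.eq_replicate_iff]
            refine ⟨by simp [hv1], ?_⟩
            simp only [List.forall_mem_map]
            intro x hx
            exact (hmemI x).1 (hv2 x hx)
          exact hvm ▸ hv3.map f
        · intro h
          obtain ⟨v, hvinf, hvmap⟩ := infix_map_pull h
          refine ⟨v, ?_, ?_, hvinf⟩
          · have := congrArg List.length hvmap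
            simpa using this
          · intro x hx
            refine (hmemI x).2 ?_
            have : f x ∈ v.map f := List.mem_map_of_mem hx
            rw [hvmap] at this
            exact (List.mem_replicate.1 this).2
    rw [Nat.card_congr (Equiv.subtypeEquivRight hiff)]
    exact card_list_prop f (q/2) hfib m (Qpred k m)
  -- real bounds
  set Q2 : ℕ := q / 2 with hQ2def
  have hQ2ge : 1 ≤ Q2 := by omega
  set Bb : ℝ := (Q2 : ℝ) * y₀ with hBb
  have hQ2pos : (0:ℝ) < (Q2:ℝ) := by exact_mod_cast hQ2ge
  have hBpos : 0 < Bb := by positivity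
  set C : ℝ := y₀ ^ (2*k+1) with hC
  have hCpos : (0:ℝ) < C := by positivity
  have hup : ∀ m : ℕ, k + 1 ≤ m → (a m : ℝ) ≤ Bb ^ m := by
    intro m hm
    rw [key m hm]
    push_cast
    rw [hBb, mul_pow]
    have h1 : ((Nat.card {p : List Bool // p.length = m ∧ Qpred k m p} : ℝ)) ≤ y₀ ^ m := by
      calc ((Nat.card {p : List Bool // p.length = m ∧ Qpred k m p} : ℝ))
          ≤ (D k (m - k) : ℝ) := by exact_mod_cast cprof_upper k m hk1 hm
        _ ≤ y₀ ^ (m - k) := D_le_pow hk1 hy₀1 hroot _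
        _ ≤ y₀ ^ m := pow_le_pow_right₀ (le_of_lt hy₀1) (by omega)
    calc (Nat.card {p : List Bool // p.length = m ∧ Qpred k m p} : ℝ) * (Q2:ℝ) ^ m
        ≤ y₀ ^ m * (Q2:ℝ) ^ m := by
          exact mul_le_mul_of_nonneg_right h1 (by positivity)
      _ = (Q2:ℝ) ^ m * y₀ ^ m := by ring
  have hlow : ∀ m : ℕ, k + 1 ≤ m → C⁻¹ * Bb ^ m ≤ (a m : ℝ) := by
    intro m hm
    rw [key m hm]
    push_cast
    rw [hBb, mul_pow]
    have h3 : y₀ ^ (m - k - 1) ≤ y₀ ^ k *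
        (Nat.card {p : List Bool // p.length = m ∧ Qpred k m p} : ℝ) := by
      calc y₀ ^ (m - k - 1) ≤ y₀ ^ k * (D k (m - k - 1) : ℝ) := pow_le_D hk1 hy₀1 hroot _
        _ ≤ y₀ ^ k * (Nat.card {p : List Bool // p.length = m ∧ Qpred k m p} : ℝ) := by
            have := cprof_lower k m hk1 hm
            have h4 : ((D k (m-k-1) : ℕ) : ℝ) ≤
                (Nat.card {p : List Bool // p.length = m ∧ Qpred k m p} : ℝ) := by
              exact_mod_cast this
            nlinarith [pow_pos hy0 k]
    have e1 : y₀ ^ m = y₀ ^ (m - k - 1) * y₀ ^ (k+1) := by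
      rw [← pow_add]; congr 1; omega
    have e2 : C = y₀ ^ (k+1) * y₀ ^ k := by
      rw [hC, ← pow_add]; congr 1; omega
    have h5 : C⁻¹ * y₀ ^ m ≤
        (Nat.card {p : List Bool // p.length = m ∧ Qpred k m p} : ℝ) := by
      rw [inv_mul_le_iff₀ hCpos, e1, e2]
      have := mul_le_mul_of_nonneg_right h3 (le_of_lt (pow_pos hy0 (k+1)))
      calc y₀ ^ (m - k - 1) * y₀ ^ (k+1)
          ≤ y₀ ^ k * (Nat.card {p : List Bool // p.length = m ∧ Qpred k m p} : ℝ) *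
            y₀ ^ (k+1) := this
        _ = (Nat.card {p : List Bool // p.length = m ∧ Qpred k m p} : ℝ) *
            (y₀ ^ (k+1) * y₀ ^ k) := by ring
        _ = y₀ ^ (k+1) * y₀ ^ k *
            (Nat.card {p : List Bool // p.length = m ∧ Qpred k m p} : ℝ) := by ring
    calc C⁻¹ * ((Q2:ℝ) ^ m * y₀ ^ m)
        = (C⁻¹ * y₀ ^ m) * (Q2:ℝ) ^ m := by ring
      _ ≤ (Nat.card {p : List Bool // p.length = m ∧ Qpred k m p} : ℝ) * (Q2:ℝ) ^ m :=
          mul_le_mul_of_nonneg_right h5 (by positivity)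
  -- the limit
  have htendinv : Tendsto (fun n : ℕ => ((n:ℝ))⁻¹) atTop (nhds 0) :=
    tendsto_inv_atTop_zero.comp tendsto_natCast_atTop_atTop
  have htend1 : Tendsto (fun n : ℕ => (C⁻¹) ^ ((n:ℝ)⁻¹)) atTop (nhds 1) := by
    have hcpos : (0:ℝ) < C⁻¹ := by positivity
    have heq : ∀ n : ℕ, (C⁻¹) ^ ((n:ℝ)⁻¹) = Real.exp (Real.log C⁻¹ * (n:ℝ)⁻¹) :=
      fun n => Real.rpow_def_of_pos hcpos _
    have h2 : Tendsto (fun n : ℕ => Real.log C⁻¹ * (n:ℝ)⁻¹) atTop (nhds (Real.log C⁻¹ * 0)) :=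
      tendsto_const_nhds.mul htendinv
    have h3 : Tendsto (fun n : ℕ => Real.exp (Real.log C⁻¹ * (n:ℝ)⁻¹)) atTop
        (nhds (Real.exp (Real.log C⁻¹ * 0))) :=
      (Real.continuous_exp.tendsto _).comp h2
    rw [show Real.exp (Real.log C⁻¹ * 0) = 1 by simp] at h3
    exact h3.congr (fun n => (heq n).symm)
  have htendlow : Tendsto (fun n : ℕ => (C⁻¹) ^ ((n:ℝ)⁻¹) * Bb) atTop (nhds Bb) := by
    have := htend1.mul_const Bb
    rwa [one_mul] at this
  have hmain : Tendsto (fun n : ℕ => ((a n : ℝ)) ^ ((n:ℝ)⁻¹)) atTop (nhds Bb) := by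
    refine tendsto_of_tendsto_of_tendsto_of_le_of_le' htendlow tendsto_const_nhds ?_ ?_
    · filter_upwards [eventually_ge_atTop (k+1)] with n hn
      have hnpos : (0:ℝ) < (n:ℝ) := by
        have : 0 < n := by omega
        exact_mod_cast this
      have h1 := hlow n hn
      have h2 : ((C⁻¹ * Bb ^ n : ℝ)) ^ ((n:ℝ)⁻¹) ≤ ((a n : ℝ)) ^ ((n:ℝ)⁻¹) :=
        Real.rpow_le_rpow (by positivity) h1 (by positivity)
      have h3 : ((C⁻¹ * Bb ^ n : ℝ)) ^ ((n:ℝ)⁻¹) =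
          (C⁻¹) ^ ((n:ℝ)⁻¹) * Bb := by
        rw [Real.mul_rpow (by positivity) (by positivity)]
        congr 1
        rw [← Real.rpow_natCast Bb n, ← Real.rpow_mul hBpos.le,
          mul_inv_cancel₀ (ne_of_gt hnpos), Real.rpow_one]
      rw [← h3]
      exact h2
    · filter_upwards [eventually_ge_atTop (k+1)] with n hn
      have hnpos : (0:ℝ) < (n:ℝ) := by
        have : 0 < n := by omega
        exact_mod_cast this
      have h1 := hup n hn
      have h2 : ((a n : ℝ)) ^ ((n:ℝ)⁻¹) ≤ ((Bb ^ n : ℝ)) ^ ((n:ℝ)⁻¹) :=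
        Real.rpow_le_rpow (by positivity) h1 (by positivity)
      have h3 : ((Bb ^ n : ℝ)) ^ ((n:ℝ)⁻¹) = Bb := by
        rw [← Real.rpow_natCast Bb n, ← Real.rpow_mul hBpos.le,
          mul_inv_cancel₀ (ne_of_gt hnpos), Real.rpow_one]
      rw [← h3]
      exact h2
  rw [hmain.limsup_eq]
  have hq2 : (Q2 : ℝ) = (q:ℝ)/2 := by
    obtain ⟨r, hr⟩ := hqe
    have h1 : Q2 = r := by omega
    have h2 : (q:ℝ) = 2 * r := by
      subst hr; push_cast; ring
    rw [h1, h2]; ring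
  rw [hBb, hq2]
end

section
/- Let r(n) denote the number of words of length n over \mathbb{Z}_q that start with a letter from I, end with a letter from J, contain no k consecutive letters from I and no k consecutive letters from J, with r(0) = 1 and r(n) = 0 for n < 0. Then r(1) = 0, r(2) = |I||J|, and for n \ge 3, r(n) = q \cdot r(n-1) - (|I|^k|J| + |I||J|^k) \cdot r(n-k-1) + |I|^k|J|^k \cdot r(n-2k). -/
open List Finset

namespace Stmt12

lemma infix_append_cases {α : Type*} {v x y : List α} (h : v <:+: x ++ y) :
    v <:+: x ∨ v <:+: y ∨
      ∃ v₁ v₂, v = v₁ ++ v₂ ∧ v₁ ≠ [] ∧ v₂ ≠ [] ∧ v₁ <:+ x ∧ v₂ <+: y := by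
  obtain ⟨s, t, hst⟩ := h
  rw [List.append_assoc] at hst
  rcases List.append_eq_append_iff.mp hst with ⟨x', hx, hvt⟩ | ⟨x', hs, hy⟩
  · rcases List.append_eq_append_iff.mp hvt with ⟨w', hx', ht⟩ | ⟨v₂, hv, hy⟩
    · left; exact ⟨s, w', by rw [hx, hx', List.append_assoc]⟩
    · rcases eq_or_ne x' [] with rfl | hx'ne
      · right; left
        rw [List.nil_append] at hv
        subst hv
        exact (show v <+: y from ⟨t, hy.symm⟩).isInfix
      · rcases eq_or_ne v₂ [] with rfl | hv₂ne
        · left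
          rw [List.append_nil] at hv
          subst hv
          exact (show v <:+ x from ⟨s, hx.symm⟩).isInfix
        · right; right
          exact ⟨x', v₂, hv, hx'ne, hv₂ne, ⟨s, hx.symm⟩, ⟨t, hy.symm⟩⟩
  · right; left
    exact ⟨x', t, by rw [hy, List.append_assoc]⟩

variable {q : ℕ}

def NoRun (A : Finset (Fin q)) (k : ℕ) (w : List (Fin q)) : Prop :=
  ∀ v : List (Fin q), v.length = k → (∀ x ∈ v, x ∈ A) → ¬ v <:+: w

lemma NoRun.nil {A : Finset (Fin q)} {k : ℕ} (hk : 0 < k) : NoRun A k [] := by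
  intro v hv _ hinf
  have := hinf.length_le
  simp only [List.length_nil] at this
  omega

lemma NoRun.append_right {A : Finset (Fin q)} {k : ℕ} (hk : 0 < k)
    {x y : List (Fin q)} (hx : NoRun A k x) (hy : ∀ c ∈ y, c ∉ A) :
    NoRun A k (x ++ y) := by
  intro v hv hvA hinf
  rcases infix_append_cases hinf with h | h | ⟨v₁, v₂, rfl, h1, h2, hs, hp⟩
  · exact hx v hv hvA h
  · have hvne : v ≠ [] := by intro h'; subst h'; simp at hv; omega
    obtain ⟨c, hc⟩ := List.exists_mem_of_ne_nil v hvne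
    exact hy c (h.subset hc) (hvA c hc)
  · obtain ⟨c, hc⟩ := List.exists_mem_of_ne_nil v₂ h2
    exact hy c (hp.subset hc) (hvA c (by simp [hc]))

lemma NoRun.append_short {A : Finset (Fin q)} {k : ℕ}
    {x y : List (Fin q)} (hx : NoRun A k x) (hlast : ∀ c ∈ x.getLast?, c ∉ A)
    (hy : y.length < k) : NoRun A k (x ++ y) := by
  intro v hv hvA hinf
  rcases infix_append_cases hinf with h | h | ⟨v₁, v₂, rfl, h1, h2, hs, hp⟩
  · exact hx v hv hvA h
  · have := h.length_le; omega
  · obtain ⟨s, hsx⟩ := hs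
    have h1' : v₁.getLast? = some (v₁.getLast h1) := List.getLast?_eq_getLast h1
    have hxl : x.getLast? = some (v₁.getLast h1) := by
      rw [← hsx, List.getLast?_append, h1']; rfl
    have hmem : v₁.getLast h1 ∈ A :=
      hvA _ (by simp [List.getLast_mem h1])
    exact hlast _ (Option.mem_def.mpr hxl) hmem

def Good (k : ℕ) (I J : Finset (Fin q)) (w : List (Fin q)) : Prop :=
  (∀ x ∈ w.head?, x ∈ I) ∧ (∀ x ∈ w.getLast?, x ∈ J) ∧ NoRun I k w ∧ NoRun J k w

def Lfin (q : ℕ) : ℕ → Finset (List (Fin q))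
  | 0 => {([] : List (Fin q))}
  | m+1 => (Finset.univ ×ˢ Lfin q m).image (fun p => p.1 :: p.2)

lemma mem_Lfin : ∀ {m : ℕ} {w : List (Fin q)}, w ∈ Lfin q m ↔ w.length = m
  | 0, w => by simp [Lfin, List.length_eq_zero_iff]
  | m+1, [] => by simp [Lfin]
  | m+1, (a :: t) => by
      have ih : t ∈ Lfin q m ↔ t.length = m := mem_Lfin
      constructor
      · intro h
        obtain ⟨⟨a', t'⟩, hp, heq⟩ := Finset.mem_image.mp h
        obtain ⟨rfl, rfl⟩ : a' = a ∧ t' = t := by simpa using heq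
        simp [ih.mp (Finset.mem_product.mp hp).2]
      · intro h
        exact Finset.mem_image.mpr ⟨(a, t),
          Finset.mem_product.mpr ⟨Finset.mem_univ _, ih.mpr (by simpa using h)⟩, rfl⟩

open scoped Classical in
noncomputable def Gfin (q k : ℕ) (I J : Finset (Fin q)) (m : ℕ) : Finset (List (Fin q)) :=
  (Lfin q m).filter (Good k I J)

lemma mem_Gfin {k m : ℕ} {I J : Finset (Fin q)} {w : List (Fin q)} :
    w ∈ Gfin q k I J m ↔ w.length = m ∧ Good k I J w := by
  classical
  rw [Gfin]
  simp [mem_Lfin, Finset.mem_filter]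

lemma Gfin_zero {k : ℕ} (hk : 0 < k) (I J : Finset (Fin q)) :
    Gfin q k I J 0 = {([] : List (Fin q))} := by
  ext w
  simp only [mem_Gfin, List.length_eq_zero_iff, Finset.mem_singleton]
  constructor
  · exact fun h => h.1
  · rintro rfl
    exact ⟨rfl, by simp, by simp, NoRun.nil hk, NoRun.nil hk⟩

def AllFin (A : Finset (Fin q)) (i : ℕ) : Finset (List (Fin q)) :=
  (Lfin q i).filter (fun v => ∀ x ∈ v, x ∈ A)

lemma mem_AllFin {A : Finset (Fin q)} {i : ℕ} {v : List (Fin q)} :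
    v ∈ AllFin A i ↔ v.length = i ∧ ∀ x ∈ v, x ∈ A := by
  simp [AllFin, mem_Lfin, Finset.mem_filter]

lemma card_AllFin (A : Finset (Fin q)) : ∀ i, (AllFin A i).card = A.card ^ i
  | 0 => by
    have h : AllFin A 0 = {([] : List (Fin q))} := by
      ext v
      simp only [mem_AllFin, List.length_eq_zero_iff, Finset.mem_singleton]
      constructor
      · exact fun h => h.1
      · rintro rfl; simp
    simp [h]
  | i+1 => by
    have himg : AllFin A (i+1) = (A ×ˢ AllFin A i).image (fun p => p.1 :: p.2) := by
      ext v
      cases v with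
      | nil =>
          simp only [mem_AllFin, Finset.mem_image]
          constructor
          · rintro ⟨h, -⟩; simp at h
          · rintro ⟨⟨a', t'⟩, -, heq⟩; simp at heq
      | cons a t =>
          constructor
          · intro hv
            rw [mem_AllFin] at hv
            obtain ⟨hlen, hall⟩ := hv
            refine Finset.mem_image.mpr ⟨(a, t),
              Finset.mem_product.mpr ⟨hall a (by simp), ?_⟩, rfl⟩
            rw [mem_AllFin]
            exact ⟨by simpa using hlen, fun x hx => hall x (by simp [hx])⟩
          · intro hv
            obtain ⟨⟨a', t'⟩, hp, heq⟩ := Finset.mem_image.mp hv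
            obtain ⟨ha', ht'⟩ := Finset.mem_product.mp hp
            rw [mem_AllFin] at ht'
            obtain ⟨rfl, rfl⟩ : a' = a ∧ t' = t := by simpa using heq
            rw [mem_AllFin]
            refine ⟨by simp [ht'.1], ?_⟩
            intro x hx
            rcases List.mem_cons.mp hx with rfl | hx
            · exact ha'
            · exact ht'.2 x hx
    have hinj : Function.Injective (fun p : Fin q × List (Fin q) => p.1 :: p.2) := by
      rintro ⟨a, t⟩ ⟨a', t'⟩ h
      simpa [Prod.ext_iff] using h
    rw [himg, Finset.card_image_of_injective _ hinj, Finset.card_product, card_AllFin A i]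
    ring


lemma takeWhile_append_barrier {α : Type*} {p : α → Bool} {β rest : List α}
    (hβ : ∀ c ∈ β, p c) (hrest : ∀ c ∈ rest.head?, ¬ p c) :
    (β ++ rest).takeWhile p = β := by
  rw [List.takeWhile_append]
  have h1 : β.takeWhile p = β := List.takeWhile_eq_self_iff.mpr hβ
  rw [if_pos (by rw [h1])]
  cases rest with
  | nil => simp
  | cons c t =>
      rw [List.takeWhile_cons_of_neg (by exact hrest c rfl)]
      simp

lemma glue_inj_aux {I J : Finset (Fin q)} (hd : Disjoint I J)
    {u α β u' α' β' : List (Fin q)}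
    (hu : ∀ c ∈ u.getLast?, c ∈ J) (hα : α ≠ []) (hαI : ∀ c ∈ α, c ∈ I)
    (hβJ : ∀ c ∈ β, c ∈ J)
    (hu' : ∀ c ∈ u'.getLast?, c ∈ J) (hα' : α' ≠ []) (hαI' : ∀ c ∈ α', c ∈ I)
    (hβJ' : ∀ c ∈ β', c ∈ J)
    (heq : u ++ α ++ β = u' ++ α' ++ β') : u = u' ∧ α = α' ∧ β = β' := by
  have key : ∀ (u₀ α₀ β₀ : List (Fin q)), (∀ c ∈ α₀, c ∈ I) → α₀ ≠ [] →
      (∀ c ∈ β₀, c ∈ J) →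
      (u₀ ++ α₀ ++ β₀).reverse.takeWhile (fun c => decide (c ∈ J)) = β₀.reverse := by
    intro u₀ α₀ β₀ hαI₀ hα₀ hβJ₀
    rw [List.reverse_append, List.reverse_append]
    apply takeWhile_append_barrier
    · intro c hc
      simp only [decide_eq_true_eq]
      exact hβJ₀ c (by simpa using hc)
    · intro c hc
      have hαr : α₀.reverse ≠ [] := by simpa using hα₀
      rw [List.head?_append] at hc
      have h2 : α₀.reverse.head? = some (α₀.reverse.head hαr) := List.head?_eq_head _
      rw [h2] at hc
      have hce : α₀.reverse.head hαr = c := by simpa using hc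
      have hmem : c ∈ α₀ := by
        rw [← hce]
        have := List.head_mem hαr
        simp only [List.head_reverse] at this ⊢
        exact List.getLast_mem _
      simp only [decide_eq_true_eq]
      exact Finset.disjoint_left.mp hd (hαI₀ c hmem)
  have hβ : β = β' := by
    have h1 := key u α β hαI hα hβJ
    have h2 := key u' α' β' hαI' hα' hβJ'
    rw [heq] at h1
    rw [h1] at h2
    exact List.reverse_injective h2
  subst hβ
  have heq2 : u ++ α = u' ++ α' := (List.append_inj' heq rfl).1
  have keyI : ∀ (u₀ α₀ : List (Fin q)), (∀ c ∈ α₀, c ∈ I) →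
      (∀ c ∈ u₀.getLast?, c ∈ J) →
      (u₀ ++ α₀).reverse.takeWhile (fun c => decide (c ∈ I)) = α₀.reverse := by
    intro u₀ α₀ hαI₀ hu₀
    rw [List.reverse_append]
    apply takeWhile_append_barrier
    · intro c hc
      simp only [decide_eq_true_eq]
      exact hαI₀ c (by simpa using hc)
    · intro c hc
      rw [List.head?_reverse] at hc
      simp only [decide_eq_true_eq]
      exact Finset.disjoint_right.mp hd (hu₀ c hc)
  have hα2 : α = α' := by
    have h1 := keyI u α hαI hu
    have h2 := keyI u' α' hαI' hu'
    rw [heq2] at h1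
    rw [h1] at h2
    exact List.reverse_injective h2
  subst hα2
  refine ⟨?_, rfl, rfl⟩
  have := List.append_inj' heq2 rfl
  exact this.1

lemma exists_decomp {k : ℕ} (hk : 2 ≤ k) {I J : Finset (Fin q)} (hd : Disjoint I J)
    (hun : I ∪ J = Finset.univ) {m : ℕ} (hm : 1 ≤ m) {w : List (Fin q)}
    (hw : w.length = m) (hg : Good k I J w) :
    ∃ u α β : List (Fin q), w = u ++ α ++ β ∧
      Good k I J u ∧ (∀ c ∈ α, c ∈ I) ∧ (∀ c ∈ β, c ∈ J) ∧
      1 ≤ α.length ∧ α.length ≤ k-1 ∧ 1 ≤ β.length ∧ β.length ≤ k-1 ∧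
      u.length + α.length + β.length = m := by
  obtain ⟨hhead, hlast, hNI, hNJ⟩ := hg
  have hwne : w ≠ [] := by intro h; subst h; simp at hw; omega
  have hIJ : ∀ c : Fin q, c ∉ J → c ∈ I := by
    intro c hc
    have hmem : c ∈ I ∪ J := by rw [hun]; exact Finset.mem_univ c
    rcases Finset.mem_union.mp hmem with h | h
    · exact h
    · exact absurd h hc
  have hIJ' : ∀ c : Fin q, c ∉ I → c ∈ J := by
    intro c hc
    have hmem : c ∈ I ∪ J := by rw [hun]; exact Finset.mem_univ c
    rcases Finset.mem_union.mp hmem with h | h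
    · exact absurd h hc
    · exact h
  set pJ : Fin q → Bool := fun c => decide (c ∈ J) with hpJ
  set pI : Fin q → Bool := fun c => decide (c ∈ I) with hpI
  set βr := w.reverse.takeWhile pJ with hβr
  set rest := w.reverse.dropWhile pJ with hrestdef
  have hsplit1 : w = rest.reverse ++ βr.reverse := by
    have h : βr ++ rest = w.reverse := List.takeWhile_append_dropWhile
    calc w = w.reverse.reverse := (List.reverse_reverse w).symm
    _ = (βr ++ rest).reverse := by rw [h]
    _ = rest.reverse ++ βr.reverse := by rw [List.reverse_append]
  have hglw : w.getLast? = some (w.getLast hwne) := List.getLast?_eq_getLast _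
  have hglJ : w.getLast hwne ∈ J := hlast _ (Option.mem_def.mpr hglw)
  have hβrne : βr ≠ [] := by
    obtain ⟨c, t, hct⟩ := List.exists_cons_of_ne_nil (show w.reverse ≠ [] by simpa using hwne)
    have hhr : w.reverse.head? = some (w.getLast hwne) := by rw [List.head?_reverse, hglw]
    rw [hct] at hhr
    have hceq : c = w.getLast hwne := by simpa using hhr
    have hcJ : c ∈ J := hceq ▸ hglJ
    rw [hβr, hct, List.takeWhile_cons_of_pos (by simp [hpJ, hcJ])]
    simp
  have hβJ : ∀ c ∈ βr.reverse, c ∈ J := by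
    intro c hc
    have h1 : c ∈ βr := by simpa using hc
    have h2 := List.mem_takeWhile_imp h1
    simpa [hpJ] using h2
  have hh : w.head? = some (w.head hwne) := List.head?_eq_head _
  have hheadI : w.head hwne ∈ I := hhead _ (Option.mem_def.mpr hh)
  have hrestne : rest ≠ [] := by
    intro h
    have hweq : w = βr.reverse := by rw [hsplit1, h]; simp
    have hmem : w.head hwne ∈ J := hβJ _ (by rw [← hweq]; exact List.head_mem hwne)
    exact Finset.disjoint_left.mp hd hheadI hmem
  have hrh : pJ (rest.head hrestne) = false := List.head_dropWhile_not pJ hrestne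
  have hrhI : rest.head hrestne ∈ I := hIJ _ (by simpa [hpJ] using hrh)
  set αr := rest.takeWhile pI with hαrdef
  set u2 := rest.dropWhile pI with hu2def
  have hsplit2 : rest.reverse = u2.reverse ++ αr.reverse := by
    have h : αr ++ u2 = rest := List.takeWhile_append_dropWhile
    calc rest.reverse = (αr ++ u2).reverse := by rw [h]
    _ = u2.reverse ++ αr.reverse := by rw [List.reverse_append]
  have hαI : ∀ c ∈ αr.reverse, c ∈ I := by
    intro c hc
    have h1 : c ∈ αr := by simpa using hc
    have h2 := List.mem_takeWhile_imp h1
    simpa [hpI] using h2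
  have hαrne : αr ≠ [] := by
    obtain ⟨c, t, hct⟩ := List.exists_cons_of_ne_nil hrestne
    have h1 : rest.head? = some c := by rw [hct]; rfl
    have h2 : rest.head? = some (rest.head hrestne) := List.head?_eq_head _
    have hceq : c = rest.head hrestne := by rw [h1] at h2; simpa using h2
    have hcI : c ∈ I := hceq ▸ hrhI
    rw [hαrdef, hct, List.takeWhile_cons_of_pos (by simp [hpI, hcI])]
    simp
  have hwsplit : w = u2.reverse ++ αr.reverse ++ βr.reverse := by
    rw [hsplit1, hsplit2]
  -- infix facts
  have hβinf : βr.reverse <:+: w := by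
    refine (List.IsSuffix.isInfix ?_)
    exact ⟨rest.reverse, hsplit1.symm⟩
  have hαinf : αr.reverse <:+: w := by
    rw [hwsplit]
    exact List.infix_append _ _ _
  have huinf : u2.reverse <:+: w := by
    refine (List.IsPrefix.isInfix ?_)
    exact ⟨αr.reverse ++ βr.reverse, by rw [hwsplit, List.append_assoc]⟩
  -- length bounds
  have hβlen : βr.reverse.length ≤ k - 1 := by
    by_contra hcon
    push_neg at hcon
    have hklen : k ≤ βr.reverse.length := by omega
    set v := βr.reverse.take k with hv
    have hlr : βr.reverse.length = βr.length := List.length_reverse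
    have hvlen : v.length = k := by simp [hv]; omega
    have hvall : ∀ c ∈ v, c ∈ J := fun c hc => hβJ c ((List.take_prefix k _).subset hc)
    exact hNJ v hvlen hvall (((List.take_prefix k _).isInfix).trans hβinf)
  have hαlen : αr.reverse.length ≤ k - 1 := by
    by_contra hcon
    push_neg at hcon
    have hklen : k ≤ αr.reverse.length := by omega
    set v := αr.reverse.take k with hv
    have hlr : αr.reverse.length = αr.length := List.length_reverse
    have hvlen : v.length = k := by simp [hv]; omega
    have hvall : ∀ c ∈ v, c ∈ I := fun c hc => hαI c ((List.take_prefix k _).subset hc)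
    exact hNI v hvlen hvall (((List.take_prefix k _).isInfix).trans hαinf)
  -- Good u
  have hGu : Good k I J u2.reverse := by
    refine ⟨?_, ?_, ?_, ?_⟩
    · intro c hc
      have hcu : u2.reverse.head? = some c := Option.mem_def.mp hc
      have hwh : w.head? = some c := by
        rw [hwsplit, List.append_assoc, List.head?_append, hcu]; rfl
      rw [hh] at hwh
      have : w.head hwne = c := by simpa using hwh
      exact this ▸ hheadI
    · intro c hc
      rw [List.getLast?_reverse] at hc
      have hu2ne : u2 ≠ [] := by
        intro h; rw [h] at hc; simp at hc
      have h2 : u2.head? = some (u2.head hu2ne) := List.head?_eq_head _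
      have hceq : u2.head hu2ne = c := by rw [h2] at hc; simpa using hc
      have hnI : pI (u2.head hu2ne) = false := List.head_dropWhile_not pI hu2ne
      exact hceq ▸ hIJ' _ (by simpa [hpI] using hnI)
    · intro v h1 h2 h3
      exact hNI v h1 h2 (h3.trans huinf)
    · intro v h1 h2 h3
      exact hNJ v h1 h2 (h3.trans huinf)
  refine ⟨u2.reverse, αr.reverse, βr.reverse, hwsplit, hGu, hαI, hβJ, ?_, hαlen, ?_, hβlen, ?_⟩
  · simpa [Nat.one_le_iff_ne_zero] using hαrne
  · simpa [Nat.one_le_iff_ne_zero] using hβrne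
  · have hlen := congrArg List.length hwsplit
    have h1 : u2.reverse.length = u2.length := List.length_reverse
    have h2 : αr.reverse.length = αr.length := List.length_reverse
    have h3 : βr.reverse.length = βr.length := List.length_reverse
    simp only [List.length_append, hw] at hlen
    omega


open scoped Classical in
lemma card_Gfin {k : ℕ} (hk : 2 ≤ k) (I J : Finset (Fin q)) (hd : Disjoint I J)
    (hun : I ∪ J = Finset.univ) (m : ℕ) (hm : 1 ≤ m) :
    (Gfin q k I J m).card =
      ∑ p ∈ ((Finset.Icc 1 (k-1)) ×ˢ (Finset.Icc 1 (k-1))).filter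
          (fun p : ℕ × ℕ => p.1 + p.2 ≤ m),
        (Gfin q k I J (m - p.1 - p.2)).card * (I.card ^ p.1 * J.card ^ p.2) := by
  classical
  set idx := ((Finset.Icc 1 (k-1)) ×ˢ (Finset.Icc 1 (k-1))).filter
      (fun p : ℕ × ℕ => p.1 + p.2 ≤ m) with hidx
  set S := idx.sigma (fun p : ℕ × ℕ =>
      (Gfin q k I J (m - p.1 - p.2)) ×ˢ (AllFin I p.1 ×ˢ AllFin J p.2)) with hS
  have himg : Gfin q k I J m =
      S.image (fun t : (Σ _ : ℕ × ℕ, List (Fin q) × (List (Fin q) × List (Fin q))) =>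
        t.2.1 ++ t.2.2.1 ++ t.2.2.2) := by
    ext w
    constructor
    · intro hwm
      rw [mem_Gfin] at hwm
      obtain ⟨hw, hg⟩ := hwm
      obtain ⟨u, α, β, hsplit, hGu, hαI, hβJ, hα1, hαk, hβ1, hβk, hlen⟩ :=
        exists_decomp hk hd hun hm hw hg
      refine Finset.mem_image.mpr ⟨⟨(α.length, β.length), (u, α, β)⟩, ?_, hsplit.symm⟩
      rw [hS, Finset.mem_sigma]
      refine ⟨?_, ?_⟩
      · rw [hidx, Finset.mem_filter, Finset.mem_product, Finset.mem_Icc, Finset.mem_Icc]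
        dsimp only
        exact ⟨⟨⟨hα1, hαk⟩, hβ1, hβk⟩, by omega⟩
      · refine Finset.mem_product.mpr ⟨?_, Finset.mem_product.mpr ⟨?_, ?_⟩⟩
        · rw [mem_Gfin]; dsimp only; exact ⟨by omega, hGu⟩
        · rw [mem_AllFin]; dsimp only; exact ⟨rfl, hαI⟩
        · rw [mem_AllFin]; dsimp only; exact ⟨rfl, hβJ⟩
    · intro hwim
      obtain ⟨⟨⟨i, j⟩, ⟨u, α, β⟩⟩, hmem, rfl⟩ := Finset.mem_image.mp hwim
      rw [hS, Finset.mem_sigma] at hmem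
      obtain ⟨hpidx, hprod⟩ := hmem
      obtain ⟨hGum, hrest⟩ := Finset.mem_product.mp hprod
      obtain ⟨hαm, hβm⟩ := Finset.mem_product.mp hrest
      rw [mem_Gfin] at hGum
      rw [mem_AllFin] at hαm hβm
      rw [hidx, Finset.mem_filter, Finset.mem_product, Finset.mem_Icc, Finset.mem_Icc] at hpidx
      dsimp only at hGum hαm hβm hpidx
      obtain ⟨⟨⟨hi1, hik⟩, hj1, hjk⟩, hijm⟩ := hpidx
      obtain ⟨hulen, hhu, hlu, hNIu, hNJu⟩ := hGum
      obtain ⟨hαlen, hαI⟩ := hαm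
      obtain ⟨hβlen, hβJ⟩ := hβm
      have hαne : α ≠ [] := by intro h; rw [h] at hαlen; simp at hαlen; omega
      have hβne : β ≠ [] := by intro h; rw [h] at hβlen; simp at hβlen; omega
      rw [mem_Gfin]
      refine ⟨by simp only [List.length_append, hulen, hαlen, hβlen]; omega, ?_, ?_, ?_, ?_⟩
      · intro c hc
        cases u with
        | nil =>
            rw [List.nil_append, List.head?_append] at hc
            have hα? : α.head? = some (α.head hαne) := List.head?_eq_head _
            rw [hα?] at hc
            have hce : α.head hαne = c := by simpa using hc
            exact hce ▸ hαI _ (List.head_mem hαne)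
        | cons a t =>
            have hce : a = c := by simpa using hc
            exact hce ▸ hhu a rfl
      · intro c hc
        rw [List.getLast?_append] at hc
        have hβ? : β.getLast? = some (β.getLast hβne) := List.getLast?_eq_getLast _
        rw [hβ?] at hc
        have hce : β.getLast hβne = c := by simpa using hc
        exact hce ▸ hβJ _ (List.getLast_mem hβne)
      · have h1 : NoRun I k (u ++ α) :=
          NoRun.append_short hNIu
            (fun c hc => Finset.disjoint_right.mp hd (hlu c hc)) (by omega)
        exact NoRun.append_right (by omega) h1
          (fun c hc => Finset.disjoint_right.mp hd (hβJ c hc))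
      · have h1 : NoRun J k (u ++ α) :=
          NoRun.append_right (by omega) hNJu
            (fun c hc => Finset.disjoint_left.mp hd (hαI c hc))
        refine NoRun.append_short h1 ?_ (show β.length < k by omega)
        intro c hc
        rw [List.getLast?_append] at hc
        have hα? : α.getLast? = some (α.getLast hαne) := List.getLast?_eq_getLast _
        rw [hα?] at hc
        have hce : α.getLast hαne = c := by simpa using hc
        exact fun hcJ =>
          Finset.disjoint_left.mp hd (hce ▸ hαI _ (List.getLast_mem hαne)) hcJ
  have hinj : Set.InjOn
      (fun t : (Σ _ : ℕ × ℕ, List (Fin q) × (List (Fin q) × List (Fin q))) =>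
        t.2.1 ++ t.2.2.1 ++ t.2.2.2) ↑S := by
    rintro ⟨⟨i, j⟩, u, α, β⟩ h1 ⟨⟨i', j'⟩, u', α', β'⟩ h2 heq
    simp only at heq
    rw [Finset.mem_coe, hS, Finset.mem_sigma] at h1 h2
    obtain ⟨hip, hprod⟩ := h1
    obtain ⟨hip', hprod'⟩ := h2
    rw [hidx, Finset.mem_filter, Finset.mem_product, Finset.mem_Icc, Finset.mem_Icc] at hip hip'
    dsimp only at hip hip'
    obtain ⟨hGum, hrest⟩ := Finset.mem_product.mp hprod
    obtain ⟨hαm, hβm⟩ := Finset.mem_product.mp hrest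
    obtain ⟨hGum', hrest'⟩ := Finset.mem_product.mp hprod'
    obtain ⟨hαm', hβm'⟩ := Finset.mem_product.mp hrest'
    rw [mem_Gfin] at hGum hGum'
    rw [mem_AllFin] at hαm hβm hαm' hβm'
    dsimp only at hGum hGum' hαm hβm hαm' hβm'
    have hαne : α ≠ [] := by
      intro h; rw [h] at hαm; simp at hαm; omega
    have hαne' : α' ≠ [] := by
      intro h; rw [h] at hαm'; simp at hαm'; omega
    obtain ⟨hu, hα, hβ⟩ := glue_inj_aux hd hGum.2.2.1 hαne hαm.2 hβm.2
      hGum'.2.2.1 hαne' hαm'.2 hβm'.2 heq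
    subst hu; subst hα; subst hβ
    obtain rfl : i = i' := by
      have := hαm.1; have := hαm'.1; omega
    obtain rfl : j = j' := by
      have := hβm.1; have := hβm'.1; omega
    rfl
  rw [himg, Finset.card_image_of_injOn hinj, hS, Finset.card_sigma]
  refine Finset.sum_congr rfl fun p hp => ?_
  rw [Finset.card_product, Finset.card_product, card_AllFin, card_AllFin]

end Stmt12

/-- Let `r n` be the number of words of length `n` over `ℤ_q` that start
with a letter from `I`, end with a letter from `J`, contain no `k` consecutive letters
from `I` and no `k` consecutive letters from `J` (where `I, J` bipartition `ℤ_q`), with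
`r 0 = 1` and `r n = 0` for `n < 0`. Then `r 1 = 0`, `r 2 = |I||J|`, and for `n ≥ 3`,
`r n = q·r (n-1) - (|I|^k|J| + |I||J|^k)·r (n-k-1) + |I|^k|J|^k·r (n-2k)`. -/
theorem stmt12 (q k : ℕ) (hq : 2 ≤ q) (hk : 2 ≤ k)
    (I J : Finset (Fin q)) (hI : I.Nonempty) (hJ : J.Nonempty)
    (hd : Disjoint I J) (hun : I ∪ J = Finset.univ)
    (r : ℤ → ℕ)
    (hneg : ∀ m : ℤ, m < 0 → r m = 0) (h0 : r 0 = 1)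
    (hcard : ∀ m : ℕ, 1 ≤ m → r m = Nat.card {w : List (Fin q) //
      w.length = m ∧ w.getD 0 ⟨0, by omega⟩ ∈ I ∧ w.getD (m - 1) ⟨0, by omega⟩ ∈ J ∧
      (¬ ∃ v : List (Fin q), v.length = k ∧ (∀ a ∈ v, a ∈ I) ∧ v <:+: w) ∧
      (¬ ∃ v : List (Fin q), v.length = k ∧ (∀ a ∈ v, a ∈ J) ∧ v <:+: w)}) :
    r 1 = 0 ∧ r 2 = I.card * J.card ∧
      ∀ n : ℤ, 3 ≤ n →
        (r n : ℤ) = q * r (n - 1)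
          - (I.card ^ k * J.card + I.card * J.card ^ k) * r (n - k - 1)
          + I.card ^ k * J.card ^ k * r (n - 2 * k) := by
  classical
  have hq' : I.card + J.card = q := by
    have h1 : (I ∪ J).card = I.card + J.card := Finset.card_union_of_disjoint hd
    rw [hun] at h1
    simpa [Finset.card_univ] using h1.symm
  have hk1 : 1 ≤ k - 1 := by omega
  have hGzero : Stmt12.Gfin q k I J 0 = {([] : List (Fin q))} :=
    Stmt12.Gfin_zero (by omega) I J
  have hrG : ∀ m : ℕ, r m = (Stmt12.Gfin q k I J m).card := by
    intro m
    rcases Nat.eq_zero_or_pos m with rfl | hm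
    · rw [hGzero]; simpa using h0
    · rw [hcard m hm]
      have hiff : ∀ w : List (Fin q),
          (w.length = m ∧ w.getD 0 ⟨0, by omega⟩ ∈ I ∧ w.getD (m - 1) ⟨0, by omega⟩ ∈ J ∧
            (¬ ∃ v : List (Fin q), v.length = k ∧ (∀ a ∈ v, a ∈ I) ∧ v <:+: w) ∧
            (¬ ∃ v : List (Fin q), v.length = k ∧ (∀ a ∈ v, a ∈ J) ∧ v <:+: w))
          ↔ w ∈ Stmt12.Gfin q k I J m := by
        intro w
        rw [Stmt12.mem_Gfin]
        constructor
        · rintro ⟨hw, h1, h2, h3, h4⟩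
          have hwne : w ≠ [] := by intro h; subst h; simp at hw; omega
          have hlp : 0 < w.length := by rw [hw]; omega
          have hgd0 : w.getD 0 ⟨0, by omega⟩ = w.head hwne := by
            rw [List.getD_eq_getElem?_getD, List.getElem?_eq_getElem hlp,
              List.head_eq_getElem]
            rfl
          have hgdl : w.getD (m - 1) ⟨0, by omega⟩ = w.getLast hwne := by
            rw [List.getD_eq_getElem?_getD,
              List.getElem?_eq_getElem (show m - 1 < w.length by omega),
              List.getLast_eq_getElem]
            simp [hw]
          refine ⟨hw, ?_, ?_, ?_, ?_⟩
          · intro c hc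
            have hh : w.head? = some (w.head hwne) := List.head?_eq_head _
            have hce : w.head hwne = c := by rw [hh] at hc; simpa using hc
            rw [← hce, ← hgd0]; exact h1
          · intro c hc
            have hh : w.getLast? = some (w.getLast hwne) := List.getLast?_eq_getLast _
            have hce : w.getLast hwne = c := by rw [hh] at hc; simpa using hc
            rw [← hce, ← hgdl]; exact h2
          · intro v hv ha hi; exact h3 ⟨v, hv, ha, hi⟩
          · intro v hv ha hi; exact h4 ⟨v, hv, ha, hi⟩
        · rintro ⟨hw, hhead, hlast, hNI, hNJ⟩
          have hwne : w ≠ [] := by intro h; subst h; simp at hw; omega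
          have hlp : 0 < w.length := by rw [hw]; omega
          have hgd0 : w.getD 0 ⟨0, by omega⟩ = w.head hwne := by
            rw [List.getD_eq_getElem?_getD, List.getElem?_eq_getElem hlp,
              List.head_eq_getElem]
            rfl
          have hgdl : w.getD (m - 1) ⟨0, by omega⟩ = w.getLast hwne := by
            rw [List.getD_eq_getElem?_getD,
              List.getElem?_eq_getElem (show m - 1 < w.length by omega),
              List.getLast_eq_getElem]
            simp [hw]
          refine ⟨hw, ?_, ?_, ?_, ?_⟩
          · rw [hgd0]
            exact hhead _ (Option.mem_def.mpr (List.head?_eq_head _))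
          · rw [hgdl]
            exact hlast _ (Option.mem_def.mpr (List.getLast?_eq_getLast _))
          · rintro ⟨v, hv, ha, hi⟩; exact hNI v hv ha hi
          · rintro ⟨v, hv, ha, hi⟩; exact hNJ v hv ha hi
      rw [Nat.card_congr (Equiv.subtypeEquivRight hiff)]
      exact Nat.card_eq_finsetCard _
  have hstar : ∀ n : ℤ, 1 ≤ n → (r n : ℤ) =
      ∑ j ∈ Finset.Icc 1 (k-1), ∑ i ∈ Finset.Icc 1 (k-1),
        (I.card : ℤ)^i * (J.card : ℤ)^j * (r (n - i - j) : ℤ) := by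
    intro n hn
    lift n to ℕ using (by omega) with m
    have hm : 1 ≤ m := by exact_mod_cast hn
    rw [hrG m, Stmt12.card_Gfin hk I J hd hun m hm]
    push_cast
    rw [Finset.sum_filter, Finset.sum_product, Finset.sum_comm]
    refine Finset.sum_congr rfl fun j hj => Finset.sum_congr rfl fun i hi => ?_
    rw [Finset.mem_Icc] at hi hj
    by_cases hij : i + j ≤ m
    · rw [if_pos hij]
      have harg : (m : ℤ) - i - j = ((m - i - j : ℕ) : ℤ) := by omega
      rw [harg, hrG (m - i - j)]
      push_cast
      ring
    · rw [if_neg hij]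
      rw [hneg ((m : ℤ) - i - j) (by omega)]
      simp
  set P : ℤ → ℤ := fun n => ∑ i ∈ Finset.Icc 1 (k-1),
    (I.card : ℤ)^i * (r (n - i) : ℤ) with hPdef
  have hstar' : ∀ n : ℤ, 1 ≤ n → (r n : ℤ) =
      ∑ j ∈ Finset.Icc 1 (k-1), (J.card : ℤ)^j * P (n - j) := by
    intro n hn
    rw [hstar n hn]
    refine Finset.sum_congr rfl fun j hj => ?_
    simp only [hPdef]
    rw [Finset.mul_sum]
    refine Finset.sum_congr rfl fun i hi => ?_
    have harg : n - (j : ℤ) - i = n - i - j := by ring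
    rw [harg]; ring
  have hreindex : ∀ f : ℕ → ℤ,
      ∑ i ∈ Finset.Icc 2 k, f i = ∑ i ∈ Finset.Icc 1 (k-1), f (i+1) := by
    intro f
    have h1 : Finset.Icc 2 k = (Finset.Icc 1 (k-1)).image (· + 1) := by
      rw [Finset.image_add_right_Icc]
      congr 1
      omega
    rw [h1, Finset.sum_image (by intro a _ b _ h; simp only at h; omega)]
  have hsplitIcc : ∀ f : ℕ → ℤ,
      (∑ i ∈ Finset.Icc 1 (k-1), f i) - (∑ i ∈ Finset.Icc 2 k, f i) = f 1 - f k := by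
    intro f
    have h1 : Finset.Icc 1 (k-1) = insert 1 (Finset.Icc 2 (k-1)) := by
      ext x; simp only [Finset.mem_Icc, Finset.mem_insert]; omega
    have h2 : Finset.Icc 2 k = insert k (Finset.Icc 2 (k-1)) := by
      ext x; simp only [Finset.mem_Icc, Finset.mem_insert]; omega
    rw [h1, h2, Finset.sum_insert (by simp only [Finset.mem_Icc]; omega),
      Finset.sum_insert (by simp only [Finset.mem_Icc]; omega)]
    ring
  have hB : ∀ n : ℤ, P n - (I.card : ℤ) * P (n-1) =
      (I.card : ℤ) * (r (n-1) : ℤ) - (I.card : ℤ)^k * (r (n-(k:ℤ)) : ℤ) := by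
    intro n
    have h2 : (I.card : ℤ) * P (n-1) =
        ∑ i ∈ Finset.Icc 2 k, (I.card : ℤ)^i * (r (n - i) : ℤ) := by
      rw [hreindex (fun i => (I.card : ℤ)^i * (r (n - i) : ℤ))]
      simp only [hPdef]
      rw [Finset.mul_sum]
      refine Finset.sum_congr rfl fun i hi => ?_
      have harg : n - 1 - (i : ℤ) = n - ((i : ℤ) + 1) := by ring
      push_cast
      rw [harg]
      ring
    rw [h2]
    simp only [hPdef]
    rw [hsplitIcc (fun i => (I.card : ℤ)^i * (r (n - i) : ℤ))]
    push_cast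
    ring
  have hA : ∀ n : ℤ, 2 ≤ n → (r n : ℤ) - (J.card : ℤ) * (r (n-1) : ℤ) =
      (J.card : ℤ) * P (n-1) - (J.card : ℤ)^k * P (n-(k:ℤ)) := by
    intro n hn
    rw [hstar' n (by omega), hstar' (n-1) (by omega)]
    have h2 : (J.card : ℤ) * ∑ j ∈ Finset.Icc 1 (k-1), (J.card : ℤ)^j * P (n-1-j)
        = ∑ j ∈ Finset.Icc 2 k, (J.card : ℤ)^j * P (n - j) := by
      rw [hreindex (fun j => (J.card : ℤ)^j * P (n - j))]
      rw [Finset.mul_sum]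
      refine Finset.sum_congr rfl fun j hj => ?_
      have harg : n - 1 - (j : ℤ) = n - ((j : ℤ) + 1) := by ring
      push_cast
      rw [harg]
      ring
    rw [h2]
    rw [hsplitIcc (fun j => (J.card : ℤ)^j * P (n - j))]
    push_cast
    ring
  have hr1 : r 1 = 0 := by
    have h := hstar 1 le_rfl
    rw [Finset.sum_eq_zero (fun j hj => Finset.sum_eq_zero (fun i hi => ?_))] at h
    · exact_mod_cast h
    · rw [Finset.mem_Icc] at hi hj
      rw [hneg ((1:ℤ) - i - j) (by omega)]
      simp
  have hr2 : r 2 = I.card * J.card := by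
    have h := hstar 2 (by norm_num)
    rw [Finset.sum_eq_single_of_mem 1 (Finset.mem_Icc.mpr ⟨le_rfl, hk1⟩)] at h
    · rw [Finset.sum_eq_single_of_mem 1 (Finset.mem_Icc.mpr ⟨le_rfl, hk1⟩)] at h
      · have harg : (2:ℤ) - ((1:ℕ):ℤ) - ((1:ℕ):ℤ) = 0 := by norm_num
        rw [harg, h0] at h
        simp only [pow_one, Nat.cast_one, mul_one] at h
        exact_mod_cast h
      · intro i hi hne
        rw [Finset.mem_Icc] at hi
        rw [hneg ((2:ℤ) - i - ((1:ℕ):ℤ)) (by omega)]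
        simp
    · intro j hj hne
      rw [Finset.mem_Icc] at hj
      refine Finset.sum_eq_zero fun i hi => ?_
      rw [Finset.mem_Icc] at hi
      rw [hneg ((2:ℤ) - i - j) (by omega)]
      simp
  refine ⟨hr1, hr2, ?_⟩
  intro n hn
  have e1 := hA n (by omega)
  have e2 := hA (n-1) (by omega)
  have b1 := hB (n-1)
  have b2 := hB (n - (k:ℤ))
  rw [show n - 1 - (k:ℤ) = n - (k:ℤ) - 1 from by ring] at e2 b1
  rw [show n - (k:ℤ) - (k:ℤ) = n - 2*(k:ℤ) from by ring] at b2
  have hq2 : (q : ℤ) = (I.card : ℤ) + (J.card : ℤ) := by exact_mod_cast hq'.symm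
  push_cast
  linear_combination e1 - (I.card:ℤ) * e2 + (J.card:ℤ) * b1 - (J.card:ℤ)^k * b2
    - (r (n-1) : ℤ) * hq2
end
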